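/- arXiv:1204.6233 — 4 statements merged into one kernel-verified Lean document; each statement's English description precedes it below -/
import Mathlib

section
/- Let t ≥ 0 be an integer, G a graph, W a connected subgraph of G of maximum degree at most 3, and Z ⊆ V(G) \ V(W) a set of vertices such that every z ∈ Z has a neighbor in V(W) and |Z| ≥ nb(t). Then there exists a valid obstruction-template (B(W), P, R) of W with respect to Z and G, i.e., a partition P of V(W) into regions each inducing a connected subgraph of W, a finite set Q_W of new vertices, a bipartite graph B(W) with independent sides Z and Q_W, and a map R : Q_W → P, satisfying: (1) for each q ∈ Q_W, N_{B(W)}(q) ⊆ N_G(R(q)); (2) each q ∈ Q_W has a private neighbor z ∈ N_{B(W)}(q), i.e., no other q' ∈ N_{B(W)}(z) satisfies R(q') = R(q); (3) every z ∈ Z has degree at least 1 in B(W); (4) every q ∈ Q_W has degree at least nb(t) and at most 3·nb(t) in B(W); (5) for each q ∈ Q_W there is at most one vertex v ∈ R(q) with N_G(v) ∩ Z ⊄ N_{B(W)}(q). -/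
/-- `twLE G t` means the treewidth of `G` is at most `t`. -/
def twLE {α : Type} (G : SimpleGraph α) (t : ℕ) : Prop :=
  ∃ (ι : Type) (T : SimpleGraph ι) (bag : ι → Finset α),
    T.IsTree ∧
    (∀ u v : α, G.Adj u v → ∃ i, u ∈ bag i ∧ v ∈ bag i) ∧
    (∀ v : α, (T.induce {i | v ∈ bag i}).Connected) ∧
    (∀ i, (bag i).card ≤ t + 1)

def wallRel (r : ℕ) (p q : ℕ × ℕ) : Prop :=
  1 ≤ p.1 ∧ p.1 ≤ r ∧ 1 ≤ p.2 ∧ p.2 ≤ r ∧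
  1 ≤ q.1 ∧ q.1 ≤ r ∧ 1 ≤ q.2 ∧ q.2 ≤ r ∧
  ((p.2 = q.2 ∧ q.1 = p.1 + 1) ∨ (p.1 = q.1 ∧ q.2 = p.2 + 1 ∧ Even (p.1 + p.2)))

def wallGraph (r : ℕ) : SimpleGraph (ℕ × ℕ) := SimpleGraph.fromRel (wallRel r)

def wallVerts (r : ℕ) : Set (ℕ × ℕ) := {p | 1 ≤ p.1 ∧ p.1 ≤ r ∧ 1 ≤ p.2 ∧ p.2 ≤ r}

/-- The `r`-wall. -/
def Wall (r : ℕ) : SimpleGraph (wallVerts r) := (wallGraph r).induce (wallVerts r)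

/-- `W` is (exactly) a subdivision of `H`. -/
def IsSubdivisionOf {γ β : Type} (W : SimpleGraph γ) (H : SimpleGraph β) : Prop :=
  ∃ (b : β → γ) (p : ∀ u v : β, H.Adj u v → W.Walk (b u) (b v)),
    Function.Injective b ∧
    (∀ (u v : β) (h : H.Adj u v), (p u v h).IsPath) ∧
    (∀ (u v : β) (h : H.Adj u v), p v u h.symm = (p u v h).reverse) ∧
    (∀ (u v : β) (h : H.Adj u v) (x : β), b x ∈ (p u v h).support → x = u ∨ x = v) ∧
    (∀ (u v : β) (h : H.Adj u v) (u' v' : β) (h' : H.Adj u' v'), s(u, v) ≠ s(u', v') →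
      ∀ w : γ, w ∈ (p u v h).support → w ∈ (p u' v' h').support → w = b u ∨ w = b v) ∧
    (∀ w : γ, ∃ (u v : β) (h : H.Adj u v), w ∈ (p u v h).support) ∧
    (∀ e ∈ W.edgeSet, ∃ (u v : β) (h : H.Adj u v), e ∈ (p u v h).edges)

/-- `G` contains `H` as a topological minor. -/
def containsSubdivision {α β : Type} (G : SimpleGraph α) (H : SimpleGraph β) : Prop :=
  ∃ W : G.Subgraph, IsSubdivisionOf W.coe H

noncomputable def nb (t : ℕ) : ℕ := ⌈(16 : ℝ) * ((t : ℝ) + 2) * Real.logb 2 ((t : ℝ) + 2)⌉₊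
noncomputable def sameF (k t : ℕ) : ℕ := 3 * (nb t) ^ 2 * t * 2 ^ (2 * k)
noncomputable def obsF (k t : ℕ) : ℕ := 2 ^ k * sameF k t + k
noncomputable def wallF (k t : ℕ) : ℕ := (2 * t + 2) * (1 + ⌈Real.sqrt (obsF k t)⌉₊)

structure CNF (V : Type) where
  ι : Type
  cls : Finset ι
  lit : ι → Finset (V × Bool)
  ok : ∀ i ∈ cls, ∀ v : V, ¬((v, true) ∈ lit i ∧ (v, false) ∈ lit i)

def CNF.vars {V : Type} [DecidableEq V] (F : CNF V) : Finset V :=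
  F.cls.biUnion (fun i => (F.lit i).image Prod.fst)

def CNF.reduce {V : Type} [DecidableEq V] (F : CNF V) (X : Finset V) (τ : V → Bool) : CNF V where
  ι := F.ι
  cls := F.cls.filter (fun i => ∀ l ∈ F.lit i, l.1 ∈ X → τ l.1 ≠ l.2)
  lit := fun i => (F.lit i).filter (fun l => l.1 ∉ X)
  ok := by
    intro i hi v hv
    exact F.ok i (Finset.mem_of_mem_filter i hi) v
      ⟨(Finset.mem_filter.mp hv.1).1, (Finset.mem_filter.mp hv.2).1⟩

def CNF.inc {V : Type} (F : CNF V) : SimpleGraph (V ⊕ F.ι) :=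
  SimpleGraph.fromRel (fun a b =>
    match a, b with
    | Sum.inl x, Sum.inr i => i ∈ F.cls ∧ ((x, true) ∈ F.lit i ∨ (x, false) ∈ F.lit i)
    | _, _ => False)

/-- The vertices of `inc F` surviving the application of the partial assignment `τ` on `X`. -/
def CNF.surv {V : Type} (F : CNF V) (X : Finset V) (τ : V → Bool) : Set (V ⊕ F.ι) :=
  {a | match a with
       | Sum.inl x => x ∉ X
       | Sum.inr i => ∀ l ∈ F.lit i, l.1 ∈ X → τ l.1 ≠ l.2}

def CNF.strongBackdoor {V : Type} [DecidableEq V] (F : CNF V) (t : ℕ) (B : Finset V) : Prop :=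
  B ⊆ F.vars ∧ ∀ τ : V → Bool, twLE (F.reduce B τ).inc t

def CNF.delete {V : Type} [DecidableEq V] (F : CNF V) (B : Finset V) : CNF V where
  ι := F.ι
  cls := F.cls
  lit := fun i => (F.lit i).filter (fun l => l.1 ∉ B)
  ok := by
    intro i hi v hv
    exact F.ok i hi v ⟨(Finset.mem_filter.mp hv.1).1, (Finset.mem_filter.mp hv.2).1⟩

noncomputable def CNF.count {V : Type} [DecidableEq V] (F : CNF V) : ℕ :=
  Nat.card {σ : {x // x ∈ F.vars} → Bool //
    ∀ i ∈ F.cls, ∃ l ∈ F.lit i, ∃ h : l.1 ∈ F.vars, σ ⟨l.1, h⟩ = l.2}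

def ValidOT {α κ : Type} (G : SimpleGraph α) (W : G.Subgraph) (Z : Finset α) (t : ℕ)
    (Q : Finset κ) (N : κ → Finset α) (P : Set (Set α)) (R : κ → Set α) : Prop :=
  (∀ A ∈ P, A ⊆ W.verts ∧ (W.induce A).Connected) ∧
  (∀ A ∈ P, ∀ A' ∈ P, A ≠ A' → Disjoint A A') ∧
  (⋃ A ∈ P, A) = W.verts ∧
  (∀ q ∈ Q, R q ∈ P) ∧
  (∀ q ∈ Q, (N q : Set α) ⊆ (Z : Set α)) ∧
  (∀ q ∈ Q, ∀ z ∈ N q, z ∉ R q ∧ ∃ w ∈ R q, G.Adj z w) ∧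
  (∀ q ∈ Q, ∃ z ∈ N q, ∀ q' ∈ Q, q' ≠ q → R q' = R q → z ∉ N q') ∧
  (∀ z ∈ Z, ∃ q ∈ Q, z ∈ N q) ∧
  (∀ q ∈ Q, nb t ≤ (N q).card ∧ (N q).card ≤ 3 * nb t) ∧
  (∀ q ∈ Q, ∀ v ∈ R q, ∀ v' ∈ R q,
    (∃ z ∈ Z, G.Adj v z ∧ z ∉ N q) → (∃ z ∈ Z, G.Adj v' z ∧ z ∉ N q) → v = v')

def HasMinor {α β : Type} (G : SimpleGraph α) (H : SimpleGraph β) : Prop :=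
  ∃ C : β → Set α,
    (∀ u, (C u).Nonempty) ∧
    (∀ u, (G.induce (C u)).Connected) ∧
    (∀ u v, u ≠ v → Disjoint (C u) (C v)) ∧
    (∀ u v, H.Adj u v → ∃ a ∈ C u, ∃ b ∈ C v, G.Adj a b)

/-!
Write `c = nb t - 1` and call a region heavy when more than `c` vertices of `Z` see it. Root `W`
at a vertex `r`, split off a branch `C` of `V \ {r}` through a neighbour `w` of `r`, and recurse
on `C` (rooted at `w`) and on the still connected rest `V \ C` (rooted at `r`). The piece left
hanging at `w` either is heavy and becomes a region, or it sees at most `c` vertices of `Z` and is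
glued to the piece at `r`. As degrees are at most `3`, every region `A` gets a root `x` with
`|N(A \ {x}) ∩ Z| ≤ 3c`; the templates of `A` are then `N(A \ {x}) ∩ Z` enlarged by the blocks of
an equitable partition of the remaining neighbours of `A`, and each block supplies the private
neighbour of its template.
-/

open Finset SimpleGraph

namespace SimpleGraph.Subgraph

variable {V : Type*} {G : SimpleGraph V} {H : G.Subgraph}

lemma Connected.reflTransGen_adj (h : H.Connected) {x y : V} (hx : x ∈ H.verts)
    (hy : y ∈ H.verts) : Relation.ReflTransGen H.Adj x y :=
  ((reachable_iff_reflTransGen _ _).1 (h ⟨x, hx⟩ ⟨y, hy⟩)).lift Subtype.val fun _ _ hab => hab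

lemma connected_of_reflTransGen {r : V} (hr : r ∈ H.verts)
    (h : ∀ x ∈ H.verts, Relation.ReflTransGen H.Adj r x) : H.Connected := by
  have reach : ∀ x, Relation.ReflTransGen H.Adj r x →
      ∀ hx : x ∈ H.verts, H.coe.Reachable ⟨r, hr⟩ ⟨x, hx⟩ := by
    intro x hrx
    induction hrx with
    | refl => exact fun _ => Reachable.refl _
    | tail _ hbc ih => exact fun _ => (ih (H.edge_vert hbc)).trans (Adj.reachable hbc)
  rw [Subgraph.connected_iff', connected_iff_exists_forall_reachable]
  exact ⟨⟨r, hr⟩, fun ⟨x, hx⟩ => reach x (h x hx) hx⟩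

lemma induce_singleton_connected (v : V) : (H.induce {v}).Connected :=
  connected_of_reflTransGen rfl fun _ hx => hx ▸ Relation.ReflTransGen.refl

lemma induce_union_connected_of_adj {s t : Set V} {u v : V} (hs : (H.induce s).Connected)
    (ht : (H.induce t).Connected) (hu : u ∈ s) (hv : v ∈ t) (huv : H.Adj u v) :
    (H.induce (s ∪ t)).Connected := by
  have mono : ∀ {s'}, s' ⊆ s ∪ t → ∀ {x y}, Relation.ReflTransGen (H.induce s').Adj x y →
      Relation.ReflTransGen (H.induce (s ∪ t)).Adj x y :=
    fun hst _ _ h => Relation.ReflTransGen.mono (r := (H.induce _).Adj)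
      (fun _ _ hab => ⟨hst hab.1, hst hab.2.1, hab.2.2⟩) _ _ h
  refine connected_of_reflTransGen (Or.inl hu) ?_
  rintro x (hx | hx)
  · exact mono Set.subset_union_left (hs.reflTransGen_adj hu hx)
  · exact .head ⟨Or.inl hu, Or.inr hv, huv⟩
      (mono Set.subset_union_right (ht.reflTransGen_adj hv hx))

end SimpleGraph.Subgraph

namespace Finset

variable {α : Type*} [DecidableEq α]

lemma exists_finpartition_card_mem_Icc (M : Finset α) {m : ℕ} (hm : 0 < m) (hM : m ≤ #M) :
    ∃ 𝒞 : Finpartition M, ∀ C ∈ 𝒞.parts, m ≤ #C ∧ #C ≤ 2 * m := by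
  set k := #M / m
  have hk : 0 < k := Nat.div_pos hM hm
  have hsplit : (k - #M % k) * (#M / k) + #M % k * (#M / k + 1) = #M := by
    have := Nat.div_add_mod #M k
    have := (Nat.mod_lt #M hk).le
    zify [this] at *
    linarith
  refine ⟨(⊥ : Finpartition M).equitabilise hsplit, fun C hC => ?_⟩
  have hlo : m ≤ #M / k := (Nat.le_div_iff_mul_le hk).2 (Nat.mul_div_le #M m)
  have hhi : #M / k < 2 * m := by
    rw [Nat.div_lt_iff_lt_mul hk]
    have hM' : #M < m * (k + 1) := Nat.lt_mul_div_succ #M hm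
    nlinarith
  rcases Finpartition.card_eq_of_mem_parts_equitabilise hC with h | h <;> omega


lemma exists_cover_by_supersets {F D : Finset α} {c : ℕ} (hFD : F ⊆ D) (hF : #F ≤ 3 * c)
    (hD : c < #D) :
    ∃ 𝒩 : Finset (Finset α),
      (∀ S ∈ 𝒩, F ⊆ S ∧ S ⊆ D ∧ c < #S ∧ #S ≤ 3 * (c + 1)) ∧
      (∀ z ∈ D, ∃ S ∈ 𝒩, z ∈ S) ∧
      ∀ S ∈ 𝒩, ∃ z ∈ S, ∀ S' ∈ 𝒩, S' ≠ S → z ∉ S' := by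
  by_cases hDc : #D ≤ 3 * (c + 1)
  · exact ⟨{D}, by simpa using ⟨hFD, hD, hDc⟩, fun z hz => ⟨D, mem_singleton_self D, hz⟩,
      by simpa [Finset.Nonempty] using card_pos.1 (by omega : 0 < #D)⟩
  have hDF : #(D \ F) = #D - #F := card_sdiff_of_subset hFD
  obtain ⟨𝒞, h𝒞⟩ := (D \ F).exists_finpartition_card_mem_Icc (m := max 1 (c + 1 - #F))
    (by omega) (by omega)
  have hF𝒞 : ∀ C ∈ 𝒞.parts, Disjoint F C := fun C hC =>
    disjoint_of_subset_right (𝒞.le hC) disjoint_sdiff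
  refine ⟨𝒞.parts.image (F ∪ ·), ?_, fun z hz => ?_, ?_⟩
  · simp only [mem_image]
    rintro _ ⟨C, hC, rfl⟩
    have := h𝒞 C hC
    rw [card_union_of_disjoint (hF𝒞 C hC)]
    exact ⟨subset_union_left, union_subset hFD ((𝒞.le hC).trans sdiff_subset), by omega, by omega⟩
  · by_cases hzF : z ∈ F
    · obtain ⟨e, he⟩ : (D \ F).Nonempty := card_pos.1 (by omega)
      obtain ⟨C, hC, -⟩ := 𝒞.exists_mem he
      exact ⟨F ∪ C, mem_image_of_mem _ hC, mem_union_left _ hzF⟩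
    · obtain ⟨C, hC, hzC⟩ := 𝒞.exists_mem (mem_sdiff.2 ⟨hz, hzF⟩)
      exact ⟨F ∪ C, mem_image_of_mem _ hC, mem_union_right _ hzC⟩
  · simp only [mem_image]
    rintro _ ⟨C, hC, rfl⟩
    obtain ⟨z, hz⟩ := 𝒞.nonempty_of_mem_parts hC
    refine ⟨z, mem_union_right _ hz, ?_⟩
    rintro _ ⟨C', hC', rfl⟩ hne hz'
    rcases mem_union.1 hz' with hzF | hzC'
    · exact disjoint_left.1 (hF𝒞 C hC) hzF hz
    · exact disjoint_left.1 (𝒞.disjoint hC' hC fun h => hne (h ▸ rfl)) hzC' hz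

end Finset

section ConnPartition

variable {α : Type*} {G : SimpleGraph α}

structure IsConnPartition (W : G.Subgraph) (V : Set α) (𝒬 : Set (Set α)) : Prop where
  connected : ∀ A ∈ 𝒬, (W.induce A).Connected
  pairwiseDisjoint : 𝒬.PairwiseDisjoint id
  sUnion_eq : ⋃₀ 𝒬 = V

namespace IsConnPartition

variable {W : G.Subgraph} {V : Set α} {𝒬 : Set (Set α)} {A B : Set α}

lemma subset (h : IsConnPartition W V 𝒬) (hA : A ∈ 𝒬) : A ⊆ V :=
  h.sUnion_eq ▸ Set.subset_sUnion_of_mem hA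

lemma singleton (v : α) : IsConnPartition W {v} {{v}} where
  connected := by simpa using W.induce_singleton_connected v
  pairwiseDisjoint := Set.pairwiseDisjoint_singleton _ _
  sUnion_eq := Set.sUnion_singleton _

lemma union {V' : Set α} {𝒬' : Set (Set α)} (h : IsConnPartition W V 𝒬)
    (h' : IsConnPartition W V' 𝒬') (hV : Disjoint V V') : IsConnPartition W (V ∪ V') (𝒬 ∪ 𝒬') where
  connected A hA := hA.elim (h.connected A) (h'.connected A)
  pairwiseDisjoint := h.pairwiseDisjoint.union h'.pairwiseDisjoint
    fun _ hA _ hB _ => hV.mono (h.subset hA) (h'.subset hB)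
  sUnion_eq := by rw [Set.sUnion_union, h.sUnion_eq, h'.sUnion_eq]

lemma merge (h : IsConnPartition W V 𝒬) (hA : A ∈ 𝒬) (hB : B ∈ 𝒬)
    (hAB : (W.induce (A ∪ B)).Connected) :
    IsConnPartition W V (insert (A ∪ B) (𝒬 \ {A, B})) where
  connected := by
    rintro X (rfl | hX)
    exacts [hAB, h.connected X hX.1]
  pairwiseDisjoint := by
    refine (h.pairwiseDisjoint.subset Set.sdiff_subset).insert fun X ⟨hX, hXAB⟩ _ => ?_
    simp only [Set.mem_insert_iff, Set.mem_singleton_iff, not_or] at hXAB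
    exact Set.disjoint_union_left.2 ⟨h.pairwiseDisjoint hA hX (Ne.symm hXAB.1),
      h.pairwiseDisjoint hB hX (Ne.symm hXAB.2)⟩
  sUnion_eq := by
    rw [← h.sUnion_eq]
    ext x
    simp only [Set.sUnion_insert, Set.mem_union, Set.mem_sUnion, Set.mem_sdiff,
      Set.mem_insert_iff, Set.mem_singleton_iff]
    constructor
    · rintro ((hx | hx) | ⟨X, ⟨hX, -⟩, hx⟩)
      exacts [⟨A, hA, hx⟩, ⟨B, hB, hx⟩, ⟨X, hX, hx⟩]
    · rintro ⟨X, hX, hx⟩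
      by_cases hXAB : X = A ∨ X = B
      · rcases hXAB with rfl | rfl
        exacts [Or.inl (Or.inl hx), Or.inl (Or.inr hx)]
      · exact Or.inr ⟨X, ⟨hX, hXAB⟩, hx⟩

end IsConnPartition

/-- The root `x` will be the only vertex of `A` allowed to see `Z` outside the templates of `A`. -/
def IsHeavyPiece (μ : Set α → ℕ) (c k : ℕ) (A : Set α) : Prop :=
  c < μ A ∧ ∃ x ∈ A, μ (A \ {x}) ≤ k

lemma IsHeavyPiece.mono {μ : Set α → ℕ} {c k k' : ℕ} {A : Set α} (h : IsHeavyPiece μ c k A)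
    (hk : k ≤ k') : IsHeavyPiece μ c k' A :=
  ⟨h.1, h.2.imp fun _ hx => ⟨hx.1, hx.2.trans hk⟩⟩

variable {W : G.Subgraph}

lemma exists_branch_at {V : Set α} {r y : α} (hV : (W.induce V).Connected) (hr : r ∈ V) (hy : y ∈ V)
    (hyr : y ≠ r) :
    ∃ C ⊆ V \ {r}, (W.induce C).Connected ∧ (W.induce (V \ C)).Connected ∧
      ∃ w ∈ C, W.Adj r w := by
  set U := V \ {r}
  set C := {v | Relation.ReflTransGen (W.induce U).Adj y v}
  have hCU : C ⊆ U := fun v hv => by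
    induction hv with
    | refl => exact ⟨hy, hyr⟩
    | tail _ h _ => exact h.2.1
  have hclosed : ∀ {c u}, c ∈ C → u ∈ U → W.Adj c u → u ∈ C :=
    fun hc hu hcu => Relation.ReflTransGen.tail hc ⟨hCU hc, hu, hcu⟩
  have hrC : r ∉ C := fun h => (hCU h).2 rfl
  refine ⟨C, hCU, ?_, ?_, ?_⟩
  · refine Subgraph.connected_of_reflTransGen (show y ∈ C from .refl) fun v (hv : v ∈ C) => ?_
    induction hv with
    | refl => exact .refl
    | @tail b x hyb hbx ih => exact ih.tail ⟨hyb, hyb.tail hbx, hbx.2.2⟩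
  · suffices ∀ x, Relation.ReflTransGen (W.induce V).Adj r x → x ∉ C →
        Relation.ReflTransGen (W.induce (V \ C)).Adj r x from
      Subgraph.connected_of_reflTransGen (show r ∈ V \ C from ⟨hr, hrC⟩) fun x hx =>
        this x (hV.reflTransGen_adj hr hx.1) hx.2
    intro x hrx
    induction hrx with
    | refl => exact fun _ => .refl
    | @tail b x _ hbx ih =>
      intro hxC
      by_cases hxr : x = r
      · exact hxr ▸ .refl
      have hbC : b ∉ C := fun hbC => hxC (hclosed hbC ⟨hbx.2.1, hxr⟩ hbx.2.2)
      exact (ih hbC).tail ⟨⟨hbx.1, hbC⟩, ⟨hbx.2.1, hxC⟩, hbx.2.2⟩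
  · suffices ∀ x, Relation.ReflTransGen (W.induce V).Adj r x → x ∈ C → ∃ w ∈ C, W.Adj r w from
      this y (hV.reflTransGen_adj hr hy) .refl
    intro x hrx
    induction hrx with
    | refl => exact fun h => absurd h hrC
    | @tail b x _ hbx ih =>
      intro hx
      by_cases hbr : b = r
      · exact ⟨x, hx, hbr ▸ hbx.2.2⟩
      · exact ih (hclosed hx ⟨hbx.1, hbr⟩ hbx.2.2.symm)

end ConnPartition

section HeavyPartition

variable {α : Type*} {G : SimpleGraph α} {W : G.Subgraph} {μ : Set α → ℕ} {c Δ : ℕ}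

theorem exists_rooted_connPartition (hfin : W.verts.Finite)
    (hdeg : ∀ v, (W.neighborSet v).ncard ≤ Δ + 1) (hμ : Monotone μ)
    (hμunion : ∀ A B, μ (A ∪ B) ≤ μ A + μ B) (hμempty : μ ∅ = 0) {V : Set α}
    (hVW : V ⊆ W.verts) (hV : (W.induce V).Connected) {r : α} (hr : r ∈ V) :
    ∃ 𝒬 P, IsConnPartition W V 𝒬 ∧ P ∈ 𝒬 ∧ r ∈ P ∧
      μ (P \ {r}) ≤ (W.neighborSet r ∩ V).ncard * c ∧
      ∀ A ∈ 𝒬, A ≠ P → IsHeavyPiece μ c (Δ * c) A := by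
  induction hn : V.ncard using Nat.strong_induction_on generalizing V r with
  | _ n ih =>
  subst hn
  obtain rfl | ⟨y, hy, hyr⟩ : V = {r} ∨ ∃ y ∈ V, y ≠ r := by
    by_contra! h
    exact h.1 (Set.eq_singleton_iff_unique_mem.2 ⟨hr, h.2⟩)
  · exact ⟨{{r}}, {r}, .singleton r, rfl, rfl, by simp [hμempty],
      fun A hA hAr => absurd hA hAr⟩
  obtain ⟨C, hC, hCconn, hVCconn, w, hw, hrw⟩ := exists_branch_at hV hr hy hyr
  have hCV : C ⊆ V := hC.trans Set.sdiff_subset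
  have hrC : r ∉ C := fun h => (hC h).2 rfl
  have hVfin : V.Finite := hfin.subset hVW
  obtain ⟨𝒬₁, P₁, h𝒬₁, hP₁, hwP₁, hμP₁, hheavy₁⟩ :=
    ih _ (Set.ncard_lt_ncard ⟨hCV, fun h => hrC (h hr)⟩ hVfin) (hCV.trans hVW) hCconn hw rfl
  obtain ⟨𝒬₂, P₂, h𝒬₂, hP₂, hrP₂, hμP₂, hheavy₂⟩ :=
    ih _ (Set.ncard_lt_ncard ⟨Set.sdiff_subset, fun h => (h (hCV hw)).2 hw⟩ hVfin)
      (Set.sdiff_subset.trans hVW) hVCconn ⟨hr, hrC⟩ rfl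
  have hnbr : ∀ v, (W.neighborSet v).Finite := fun v => hfin.subset (W.neighborSet_subset_verts v)
  have hdeg_w : (W.neighborSet w ∩ C).ncard ≤ Δ := Nat.lt_succ_iff.1 <|
    (Set.ncard_lt_ncard ⟨Set.inter_subset_left, fun h => hrC (h hrw.symm).2⟩ (hnbr w)).trans_le
      (hdeg w)
  have hdeg_r : (W.neighborSet r ∩ (V \ C)).ncard < (W.neighborSet r ∩ V).ncard :=
    Set.ncard_lt_ncard ⟨Set.inter_subset_inter_right _ Set.sdiff_subset,
      fun h => (h ⟨hrw, hCV hw⟩).2.2 hw⟩ ((hnbr r).inter_of_left _)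
  have h𝒬 : IsConnPartition W V (𝒬₁ ∪ 𝒬₂) := by
    simpa [Set.union_sdiff_cancel hCV] using h𝒬₁.union h𝒬₂ Set.disjoint_sdiff_right
  by_cases hP₁c : c < μ P₁
  · refine ⟨𝒬₁ ∪ 𝒬₂, P₂, h𝒬, Or.inr hP₂, hrP₂, hμP₂.trans (Nat.mul_le_mul_right _ hdeg_r.le), ?_⟩
    rintro A (hA | hA) hAP
    · obtain rfl | hAP₁ := eq_or_ne A P₁
      · exact ⟨hP₁c, w, hwP₁, hμP₁.trans (Nat.mul_le_mul_right _ hdeg_w)⟩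
      · exact hheavy₁ A hA hAP₁
    · exact hheavy₂ A hA hAP
  refine ⟨_, P₁ ∪ P₂, h𝒬.merge (Or.inl hP₁) (Or.inr hP₂) <|
      Subgraph.induce_union_connected_of_adj (h𝒬₁.connected _ hP₁) (h𝒬₂.connected _ hP₂) hwP₁
        hrP₂ hrw.symm,
    Set.mem_insert _ _, Or.inr hrP₂, ?_, ?_⟩
  · calc μ ((P₁ ∪ P₂) \ {r}) ≤ μ (P₁ ∪ (P₂ \ {r})) :=
          hμ (Set.union_sdiff_distrib ▸ Set.union_subset_union_left _ Set.sdiff_subset)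
      _ ≤ μ P₁ + μ (P₂ \ {r}) := hμunion _ _
      _ ≤ c + (W.neighborSet r ∩ (V \ C)).ncard * c := add_le_add (not_lt.1 hP₁c) hμP₂
      _ = ((W.neighborSet r ∩ (V \ C)).ncard + 1) * c := by ring
      _ ≤ (W.neighborSet r ∩ V).ncard * c := Nat.mul_le_mul_right _ hdeg_r
  · rintro A (rfl | ⟨hA, hAP⟩) hAP'
    · exact absurd rfl hAP'
    simp only [Set.mem_insert_iff, Set.mem_singleton_iff, not_or] at hAP
    rcases hA with hA | hA
    exacts [hheavy₁ A hA hAP.1, hheavy₂ A hA hAP.2]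

theorem exists_heavy_connPartition (hfin : W.verts.Finite) (hconn : W.Connected)
    (hdeg : ∀ v, (W.neighborSet v).ncard ≤ Δ + 1) (hμ : Monotone μ)
    (hμunion : ∀ A B, μ (A ∪ B) ≤ μ A + μ B) (hμempty : μ ∅ = 0) (hc : c < μ W.verts) :
    ∃ 𝒬, IsConnPartition W W.verts 𝒬 ∧ ∀ A ∈ 𝒬, IsHeavyPiece μ c ((Δ + 1) * c) A := by
  obtain ⟨r, hr⟩ := hconn.nonempty
  obtain ⟨𝒬, P, h𝒬, hP, hrP, hμP, hheavy⟩ := exists_rooted_connPartition (c := c) hfin hdeg hμ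
    hμunion hμempty subset_rfl (by rwa [Subgraph.induce_self_verts]) hr
  have hweak : ∀ A ∈ 𝒬, A ≠ P → IsHeavyPiece μ c ((Δ + 1) * c) A := fun A hA hAP =>
    (hheavy A hA hAP).mono (Nat.mul_le_mul_right _ Δ.le_succ)
  by_cases hPc : c < μ P
  · refine ⟨𝒬, h𝒬, fun A hA => ?_⟩
    obtain rfl | hAP := eq_or_ne A P
    · refine ⟨hPc, r, hrP, hμP.trans (Nat.mul_le_mul_right _ ?_)⟩
      exact (Set.ncard_inter_le_ncard_left _ _ (hfin.subset (W.neighborSet_subset_verts r))).trans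
        (hdeg r)
    · exact hweak A hA hAP
  obtain ⟨A, hA, hAP, u, huP, v, hvA, huv⟩ : ∃ A ∈ 𝒬, A ≠ P ∧ ∃ u ∈ P, ∃ v ∈ A, W.Adj u v := by
    obtain ⟨v, hv, hvP⟩ : ∃ v ∈ W.verts, v ∉ P :=
      Set.not_subset.1 fun h => hPc (hc.trans_le (hμ h))
    obtain ⟨p⟩ := hconn ⟨r, hr⟩ ⟨v, hv⟩
    obtain ⟨d, -, hdP, hdP'⟩ := p.exists_boundary_dart (Subtype.val ⁻¹' P) hrP hvP
    obtain ⟨A, hA, hdA⟩ := Set.mem_sUnion.1 (h𝒬.sUnion_eq.superset d.snd.2)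
    exact ⟨A, hA, fun h => hdP' (h ▸ hdA), _, hdP, _, hdA, d.adj⟩
  refine ⟨_, h𝒬.merge hA hP <| Subgraph.induce_union_connected_of_adj (h𝒬.connected A hA)
    (h𝒬.connected P hP) hvA huP huv.symm, ?_⟩
  rintro B (rfl | ⟨hB, hBAP⟩)
  · obtain ⟨hcA, x, hxA, hμA⟩ := hheavy A hA hAP
    refine ⟨hcA.trans_le (hμ Set.subset_union_left), x, Or.inl hxA, ?_⟩
    calc μ ((A ∪ P) \ {x}) ≤ μ ((A \ {x}) ∪ P) :=
          hμ (Set.union_sdiff_distrib ▸ Set.union_subset_union_right _ Set.sdiff_subset)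
      _ ≤ μ (A \ {x}) + μ P := hμunion _ _
      _ ≤ Δ * c + c := add_le_add hμA (not_lt.1 hPc)
      _ = (Δ + 1) * c := by ring
  · simp only [Set.mem_insert_iff, Set.mem_singleton_iff, not_or] at hBAP
    exact hweak B hB hBAP.2

end HeavyPartition

namespace SimpleGraph

variable {α : Type*} (G : SimpleGraph α) (Z : Finset α)

noncomputable def neighborsIn (A : Set α) : Finset α := by
  classical exact Z.filter fun z => ∃ a ∈ A, G.Adj z a

variable {G Z}

lemma mem_neighborsIn {A : Set α} {z : α} :
    z ∈ G.neighborsIn Z A ↔ z ∈ Z ∧ ∃ a ∈ A, G.Adj z a := by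
  simp [neighborsIn]

lemma neighborsIn_subset (A : Set α) : G.neighborsIn Z A ⊆ Z := fun _ hz =>
  (mem_neighborsIn.1 hz).1

lemma neighborsIn_mono : Monotone (G.neighborsIn Z) := fun _ _ hAB _ hz =>
  mem_neighborsIn.2 ((mem_neighborsIn.1 hz).imp_right fun ⟨a, ha, hza⟩ => ⟨a, hAB ha, hza⟩)

@[simp]
lemma neighborsIn_empty : G.neighborsIn Z ∅ = ∅ := by
  ext; simp [mem_neighborsIn]

lemma card_neighborsIn_union_le (A B : Set α) :
    #(G.neighborsIn Z (A ∪ B)) ≤ #(G.neighborsIn Z A) + #(G.neighborsIn Z B) := by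
  classical
  refine (card_le_card fun z hz => ?_).trans (card_union_le _ _)
  obtain ⟨hzZ, a, ha | ha, hza⟩ := mem_neighborsIn.1 hz
  exacts [mem_union_left _ (mem_neighborsIn.2 ⟨hzZ, a, ha, hza⟩),
    mem_union_right _ (mem_neighborsIn.2 ⟨hzZ, a, ha, hza⟩)]

lemma neighborsIn_eq_self {A : Set α} (h : ∀ z ∈ Z, ∃ a ∈ A, G.Adj z a) :
    G.neighborsIn Z A = Z :=
  (neighborsIn_subset A).antisymm fun z hz => mem_neighborsIn.2 ⟨hz, h z hz⟩

end SimpleGraph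

lemma Finset.exists_bijOn_nat {κ : Type*} [Nonempty κ] (Q : Finset κ) :
    ∃ (Q' : Finset ℕ) (e : ℕ → κ), Set.BijOn e Q' Q := by
  classical
  refine ⟨range #Q, fun n => if h : n < #Q then Q.equivFin.symm ⟨n, h⟩ else Classical.arbitrary κ,
    fun n hn => ?_, fun m hm n hn hmn => ?_, fun q hq => ?_⟩
  · simp only [coe_range, Set.mem_Iio] at hn
    simp [dif_pos hn]
  · simp only [coe_range, Set.mem_Iio] at hm hn
    simp only [dif_pos hm, dif_pos hn] at hmn
    exact Fin.val_eq_of_eq (Q.equivFin.symm.injective (Subtype.ext hmn))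
  · exact ⟨Q.equivFin ⟨q, hq⟩, by simp, by simp⟩

section ObstructionTemplate

variable {α : Type} {G : SimpleGraph α} {W : G.Subgraph} {Z : Finset α} {t : ℕ}

lemma ValidOT.comp {κ κ' : Type} {Q : Finset κ} {N : κ → Finset α} {P : Set (Set α)}
    {R : κ → Set α} (h : ValidOT G W Z t Q N P R) {Q' : Finset κ'} {e : κ' → κ}
    (he : Set.BijOn e Q' Q) : ValidOT G W Z t Q' (N ∘ e) P (R ∘ e) := by
  have hmem : ∀ q ∈ Q', e q ∈ Q := fun q hq => he.mapsTo hq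
  obtain ⟨h₁, h₂, h₃, h₄, h₅, h₆, h₇, h₈, h₉, h₁₀⟩ := h
  refine ⟨h₁, h₂, h₃, fun q hq => h₄ _ (hmem q hq), fun q hq => h₅ _ (hmem q hq),
    fun q hq => h₆ _ (hmem q hq), fun q hq => ?_, fun z hz => ?_, fun q hq => h₉ _ (hmem q hq),
    fun q hq => h₁₀ _ (hmem q hq)⟩
  · obtain ⟨z, hz, hpriv⟩ := h₇ _ (hmem q hq)
    exact ⟨z, hz, fun q' hq' hne => hpriv _ (hmem q' hq') fun h => hne (he.injOn hq' hq h)⟩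
  · obtain ⟨q, hq, hzq⟩ := h₈ z hz
    obtain ⟨q', hq', rfl⟩ := he.surjOn hq
    exact ⟨q', hq', hzq⟩

theorem exists_validOT_of_heavy_connPartition {c : ℕ} {𝒬 : Set (Set α)}
    (hZW : ∀ z ∈ Z, z ∉ W.verts) (hZnbr : ∀ z ∈ Z, ∃ w ∈ W.verts, G.Adj z w)
    (h𝒬 : IsConnPartition W W.verts 𝒬) (h𝒬fin : 𝒬.Finite) (hc : nb t = c + 1)
    (hheavy : ∀ A ∈ 𝒬, IsHeavyPiece (fun A => #(G.neighborsIn Z A)) c (3 * c) A) :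
    ∃ Q : Finset (Set α × Finset α), ValidOT G W Z t Q Prod.snd 𝒬 Prod.fst := by
  classical
  have hfam : ∀ A ∈ 𝒬, ∃ 𝒩 : Finset (Finset α), ∃ x ∈ A,
      (∀ S ∈ 𝒩, G.neighborsIn Z (A \ {x}) ⊆ S ∧ S ⊆ G.neighborsIn Z A ∧ c < #S ∧
        #S ≤ 3 * (c + 1)) ∧
      (∀ z ∈ G.neighborsIn Z A, ∃ S ∈ 𝒩, z ∈ S) ∧
      ∀ S ∈ 𝒩, ∃ z ∈ S, ∀ S' ∈ 𝒩, S' ≠ S → z ∉ S' := by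
    intro A hA
    obtain ⟨hcA, x, hxA, hμx⟩ := hheavy A hA
    obtain ⟨𝒩, h𝒩⟩ := exists_cover_by_supersets (neighborsIn_mono Set.sdiff_subset) hμx hcA
    exact ⟨𝒩, x, hxA, h𝒩⟩
  choose! 𝒩 h𝒩 using hfam
  let Q := h𝒬fin.toFinset.biUnion fun A => (𝒩 A).image (Prod.mk A)
  have hQ : ∀ {q : Set α × Finset α}, q ∈ Q ↔ q.1 ∈ 𝒬 ∧ q.2 ∈ 𝒩 q.1 := by
    rintro ⟨A, S⟩
    simp [Q]
  refine ⟨Q, fun A hA => ⟨h𝒬.subset hA, h𝒬.connected A hA⟩,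
    fun A hA B hB => h𝒬.pairwiseDisjoint hA hB, by rw [← Set.sUnion_eq_biUnion, h𝒬.sUnion_eq],
    fun q hq => (hQ.1 hq).1, ?_, ?_, ?_, ?_, ?_, ?_⟩
  · rintro ⟨A, S⟩ hq
    obtain ⟨hA, hS⟩ := hQ.1 hq
    obtain ⟨x, -, hS𝒩, -⟩ := h𝒩 A hA
    exact coe_subset.2 ((hS𝒩 S hS).2.1.trans (neighborsIn_subset A))
  · rintro ⟨A, S⟩ hq z hz
    obtain ⟨hA, hS⟩ := hQ.1 hq
    obtain ⟨x, -, hS𝒩, -⟩ := h𝒩 A hA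
    obtain ⟨hzZ, a, ha, hza⟩ := mem_neighborsIn.1 ((hS𝒩 S hS).2.1 hz)
    exact ⟨fun hzA => hZW z hzZ (h𝒬.subset hA hzA), a, ha, hza⟩
  · rintro ⟨A, S⟩ hq
    obtain ⟨hA, hS⟩ := hQ.1 hq
    obtain ⟨x, -, -, -, hpriv⟩ := h𝒩 A hA
    obtain ⟨z, hz, hz'⟩ := hpriv S hS
    refine ⟨z, hz, ?_⟩
    rintro ⟨A', S'⟩ hq' hne (rfl : A' = A)
    exact hz' S' (hQ.1 hq').2 fun h => hne (h ▸ rfl)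
  · intro z hz
    obtain ⟨w, hw, hzw⟩ := hZnbr z hz
    obtain ⟨A, hA, hwA⟩ := Set.mem_sUnion.1 (h𝒬.sUnion_eq.superset hw)
    obtain ⟨x, -, -, hcover, -⟩ := h𝒩 A hA
    obtain ⟨S, hS, hzS⟩ := hcover z (mem_neighborsIn.2 ⟨hz, w, hwA, hzw⟩)
    exact ⟨(A, S), hQ.2 ⟨hA, hS⟩, hzS⟩
  · rintro ⟨A, S⟩ hq
    obtain ⟨hA, hS⟩ := hQ.1 hq
    obtain ⟨x, -, hS𝒩, -⟩ := h𝒩 A hA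
    rw [hc]
    exact ⟨(hS𝒩 S hS).2.2.1, (hS𝒩 S hS).2.2.2⟩
  · rintro ⟨A, S⟩ hq v hv v' hv' ⟨z, hz, hvz, hzS⟩ ⟨z', hz', hvz', hz'S⟩
    obtain ⟨hA, hS⟩ := hQ.1 hq
    obtain ⟨x, -, hS𝒩, -⟩ := h𝒩 A hA
    have hroot : ∀ u ∈ A, ∀ y ∈ Z, G.Adj u y → y ∉ S → u = x := fun u hu y hy huy hyS => by
      by_contra hux
      exact hyS ((hS𝒩 S hS).1 (mem_neighborsIn.2 ⟨hy, u, ⟨hu, hux⟩, huy.symm⟩))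
    rw [hroot v hv z hz hvz hzS, hroot v' hv' z' hz' hvz' hz'S]

end ObstructionTemplate

lemma nb_pos (t : ℕ) : 0 < nb t := by
  rw [nb, Nat.ceil_pos]
  have : 0 < Real.logb 2 ((t : ℝ) + 2) :=
    Real.logb_pos (by norm_num) (by linarith [(t.cast_nonneg : (0 : ℝ) ≤ t)])
  positivity

/-- For every connected subgraph `W` of `G` of maximum degree at most 3 and every
set `Z ⊆ V(G) \ V(W)` of at least `nb(t)` vertices, each having a neighbor in `V(W)`, there
exists a valid obstruction-template of `W` with respect to `Z` and `G`. -/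
theorem stmt3 {α : Type} (t : ℕ) (G : SimpleGraph α) (W : G.Subgraph)
    (hWfin : W.verts.Finite) (hWconn : W.Connected)
    (hWdeg : ∀ v : α, (W.neighborSet v).ncard ≤ 3)
    (Z : Finset α) (hZW : ∀ z ∈ Z, z ∉ W.verts)
    (hZnbr : ∀ z ∈ Z, ∃ w ∈ W.verts, G.Adj z w)
    (hZcard : nb t ≤ Z.card) :
    ∃ (Q : Finset ℕ) (N : ℕ → Finset α) (P : Set (Set α)) (R : ℕ → Set α),
      ValidOT G W Z t Q N P R := by
  obtain ⟨c, hc⟩ : ∃ c, nb t = c + 1 := Nat.exists_eq_add_one.2 (nb_pos t)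
  obtain ⟨𝒬, h𝒬, hheavy⟩ := exists_heavy_connPartition (Δ := 2) (c := c)
    (μ := fun A => #(G.neighborsIn Z A)) hWfin hWconn hWdeg
    (fun _ _ hAB => card_le_card (neighborsIn_mono hAB)) card_neighborsIn_union_le (by simp)
    (by rw [neighborsIn_eq_self hZnbr]; omega)
  obtain ⟨Q, hQ⟩ := exists_validOT_of_heavy_connPartition hZW hZnbr h𝒬
    (hWfin.finite_subsets.subset fun _ => h𝒬.subset) hc hheavy
  obtain ⟨Q', e, he⟩ := Q.exists_bijOn_nat
  exact ⟨Q', _, _, _, hQ.comp he⟩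
end

section
/- Let G be a graph, T a tree that is a subgraph of G, Z ⊆ V(G), and m ≥ 1 an integer. For an edge uv of T, let T_u(uv) denote the component of T − uv containing u, and for a subtree T' of T let w(T') = |Z ∩ N_G(V(T'))|. If w(T) ≥ 2m − 1, then there exists a vertex u of T such that w(T_u(uv)) ≥ m for every neighbor v of u in T. -/
/-- The vertex set of the component of `u` in `T` after deleting the edge `uv`. -/
def compSet {α : Type} {G : SimpleGraph α} (T : G.Subgraph) (u v : α) : Set α :=
  {w | ∃ (hw : w ∈ (T.deleteEdges {s(u, v)}).verts) (hu : u ∈ (T.deleteEdges {s(u, v)}).verts),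
        (T.deleteEdges {s(u, v)}).coe.Reachable ⟨w, hw⟩ ⟨u, hu⟩}

/-!
Call the direction `u → v` of an edge of `T` light if `w(T_u(uv)) < m`. The two branches
`T_u(uv)` and `T_v(uv)` cover `T`, so `Z ∩ N(T)` lies in the union of their neighbourhoods and
`2m - 1 ≤ w(T_u(uv)) + w(T_v(uv))`: at most one direction of each edge is light. Light
directions therefore form an orientation of part of a finite tree, and such an orientation has
a sink: if `u → v` is light with `T_u(uv)` as large as possible, then for every other
neighbour `x` of `v` the branch `T_v(vx)` strictly contains `T_u(uv)`, so `v → x` is heavy.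
-/

namespace SimpleGraph

variable {V : Type*} {H : SimpleGraph V}

/-- The paper's `T_u(uv)`. -/
def branch (H : SimpleGraph V) (u v : V) : Set V :=
  {w | (H.deleteEdges {s(u, v)}).Reachable w u}

lemma Preconnected.mem_branch_or_mem_branch (hH : H.Preconnected) (u v w : V) :
    w ∈ H.branch u v ∨ w ∈ H.branch v u := by
  change (H.deleteEdges {s(u, v)}).Reachable w u ∨ (H.deleteEdges {s(v, u)}).Reachable w v
  rw [Sym2.eq_swap (a := v)]
  have h := (reachable_iff_reflTransGen w u).mp (hH w u)
  induction h using Relation.ReflTransGen.head_induction_on with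
  | refl => exact .inl .rfl
  | @head a b hab _ ih =>
    by_cases he : s(a, b) = s(u, v)
    · rcases Sym2.eq_iff.mp he with ⟨rfl, -⟩ | ⟨rfl, -⟩
      · exact .inl .rfl
      · exact .inr .rfl
    · have hab' : (H.deleteEdges {s(u, v)}).Adj a b := by simp [hab, he]
      exact ih.imp hab'.reachable.trans hab'.reachable.trans

lemma Preconnected.branch_union_branch (hH : H.Preconnected) (u v : V) :
    H.branch u v ∪ H.branch v u = Set.univ :=
  Set.eq_univ_of_forall fun w => hH.mem_branch_or_mem_branch u v w

lemma IsAcyclic.notMem_branch (hH : H.IsAcyclic) {u v : V} (huv : H.Adj u v) :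
    v ∉ H.branch u v :=
  fun h => isBridge_iff.mp (isAcyclic_iff_forall_adj_isBridge.mp hH huv) h.symm

lemma IsAcyclic.insert_branch_subset (hH : H.IsAcyclic) {u v x : V} (huv : H.Adj u v)
    (hvx : H.Adj v x) (hxu : x ≠ u) : insert v (H.branch u v) ⊆ H.branch v x := by
  classical
  have huv' : (H.deleteEdges {s(v, x)}).Adj u v := by simp [huv, huv.ne, hxu.symm]
  rintro w (rfl | hw)
  · exact .rfl
  obtain ⟨p⟩ := hw
  -- A walk from `w` to `u` avoiding `uv` cannot pass through `v`, hence avoids `vx` as well.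
  have hp : ∀ e ∈ p.edges, e ∈ (H.deleteEdges {s(v, x)}).edgeSet := by
    intro e he
    have he' := p.edges_subset_edgeSet he
    rw [edgeSet_deleteEdges] at he' ⊢
    refine ⟨he'.1, fun hvx' => hH.notMem_branch huv ?_⟩
    rw [Set.mem_singleton_iff.mp hvx'] at he
    exact ⟨p.dropUntil v (p.fst_mem_support_of_mem_edges he)⟩
  exact ⟨(p.transfer _ hp).concat huv'⟩

theorem IsAcyclic.exists_sink [Finite V] [Nonempty V] (hH : H.IsAcyclic) (r : V → V → Prop)
    (hr : ∀ u v, H.Adj u v → r u v → ¬r v u) : ∃ u, ∀ v, H.Adj u v → ¬r u v := by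
  by_cases hP : ∃ p : V × V, H.Adj p.1 p.2 ∧ r p.1 p.2
  · -- The head of an `r`-edge whose branch is largest is a sink.
    obtain ⟨⟨u, v⟩, ⟨huv, hr_uv⟩, hmax⟩ := Set.Finite.exists_maximalFor
      (fun p : V × V => (H.branch p.1 p.2).ncard) _ (Set.toFinite _) hP
    refine ⟨v, fun x hvx hr_vx => ?_⟩
    obtain rfl | hxu := eq_or_ne x u
    · exact hr _ _ huv hr_uv hr_vx
    have hlt : (H.branch u v).ncard < (H.branch v x).ncard :=
      Set.ncard_lt_ncard ((Set.ssubset_insert (hH.notMem_branch huv)).trans_subset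
        (hH.insert_branch_subset huv hvx hxu))
    exact hlt.not_ge (hmax (j := (v, x)) ⟨hvx, hr_vx⟩ hlt.le)
  · push Not at hP
    obtain ⟨u⟩ := ‹Nonempty V›
    exact ⟨u, fun v huv => hP (u, v) huv⟩

end SimpleGraph

section openNbhd

variable {α : Type*} (G : SimpleGraph α)

def openNbhd (S : Set α) : Set α := {x | x ∉ S ∧ ∃ s ∈ S, G.Adj s x}

variable {G}

lemma openNbhd_union_subset (S S' : Set α) :
    openNbhd G (S ∪ S') ⊆ openNbhd G S ∪ openNbhd G S' := by
  rintro x ⟨hx, s, hs | hs, hsx⟩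
  · exact .inl ⟨fun h => hx (.inl h), s, hs, hsx⟩
  · exact .inr ⟨fun h => hx (.inr h), s, hs, hsx⟩

lemma openNbhd_subset_union_of_subset {S U : Set α} (h : S ⊆ U) :
    openNbhd G S ⊆ openNbhd G U ∪ U := by
  rintro x ⟨-, s, hs, hsx⟩
  by_cases hxU : x ∈ U
  · exact .inr hxU
  · exact .inl ⟨hxU, s, h hs, hsx⟩

lemma ncard_inter_openNbhd_union_le {Z S S' : Set α} (hfin : (S ∪ S').Finite)
    (hZfin : (Z ∩ openNbhd G (S ∪ S')).Finite) :
    (Z ∩ openNbhd G (S ∪ S')).ncard ≤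
      (Z ∩ openNbhd G S).ncard + (Z ∩ openNbhd G S').ncard := by
  have hfin' : ∀ S₀ ⊆ S ∪ S', (Z ∩ openNbhd G S₀).Finite := fun S₀ h =>
    (hZfin.union hfin).subset fun x ⟨hz, hx⟩ =>
      (openNbhd_subset_union_of_subset h hx).imp (⟨hz, ·⟩) id
  have hsub : Z ∩ openNbhd G (S ∪ S') ⊆ Z ∩ openNbhd G S ∪ Z ∩ openNbhd G S' := by
    rw [← Set.inter_union_distrib_left]
    exact Set.inter_subset_inter_right Z (openNbhd_union_subset S S')
  calc (Z ∩ openNbhd G (S ∪ S')).ncard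
      ≤ (Z ∩ openNbhd G S ∪ Z ∩ openNbhd G S').ncard :=
        Set.ncard_le_ncard hsub
          ((hfin' S Set.subset_union_left).union (hfin' S' Set.subset_union_right))
    _ ≤ _ := Set.ncard_union_le _ _

end openNbhd

lemma compSet_eq_image_branch {α : Type} {G : SimpleGraph α} (T : G.Subgraph) (u v : T.verts) :
    compSet T u v = Subtype.val '' T.coe.branch u v := by
  have : T.coe.deleteEdges {s(u, v)} = (T.deleteEdges {s(u.1, v.1)}).coe := by
    ext a b
    change _ ↔ T.Adj a b ∧ s(a.1, b.1) ∉ ({s(u.1, v.1)} : Set (Sym2 α))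
    simp [Subtype.ext_iff]
  ext w
  simp [compSet, SimpleGraph.branch, ← this]

/-- If `T` is a tree subgraph of `G`, `Z ⊆ V(G)` and `w(T') = |Z ∩ N_G(V(T'))|`
satisfies `w(T) ≥ 2m−1`, then some vertex `u` of `T` has `w(T_u(uv)) ≥ m` for every neighbor
`v` of `u` in `T`. -/
theorem stmt4 {α : Type} (G : SimpleGraph α) (T : G.Subgraph)
    (hTfin : T.verts.Finite) (hTree : T.coe.IsTree)
    (Z : Set α) (m : ℕ) (hm : 1 ≤ m)
    (hw : 2 * m - 1 ≤ (Z ∩ {x | x ∉ T.verts ∧ ∃ s ∈ T.verts, G.Adj s x}).ncard) :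
    ∃ u ∈ T.verts, ∀ v : α, T.Adj u v →
      m ≤ (Z ∩ {x | x ∉ compSet T u v ∧ ∃ s ∈ compSet T u v, G.Adj s x}).ncard := by
  change 2 * m - 1 ≤ (Z ∩ openNbhd G T.verts).ncard at hw
  have : Finite T.verts := hTfin.to_subtype
  have : Nonempty T.verts := hTree.connected.nonempty
  have hZfin : (Z ∩ openNbhd G T.verts).Finite := Set.finite_of_ncard_pos (by omega)
  have hcover (u v : T.verts) : compSet T u v ∪ compSet T v u = T.verts := by
    rw [compSet_eq_image_branch, compSet_eq_image_branch, ← Set.image_union,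
      hTree.connected.preconnected.branch_union_branch, Set.image_univ, Subtype.range_coe]
  obtain ⟨u, hu⟩ := hTree.isAcyclic.exists_sink
    (fun a b : T.verts => (Z ∩ openNbhd G (compSet T a b)).ncard < m) fun a b _ hab hba => by
      have := ncard_inter_openNbhd_union_le (G := G) (Z := Z)
        ((hcover a b).symm ▸ hTfin) ((hcover a b).symm ▸ hZfin)
      rw [hcover a b] at this
      omega
  exact ⟨u, u.2, fun v huv => not_lt.mp (hu ⟨v, T.edge_vert huv.symm⟩ huv)⟩
end

section
/- Let F be a CNF formula, t ≥ 0 an integer, W a subgraph of inc(F), and Z ⊆ var(F) \ V(W). Let (B(W), P, R) be a valid obstruction-template of W with respect to Z and inc(F), with new-vertex side Q_W, and let q ∈ Q_W. Let B ⊆ var(F) be a set of variables such that B ∩ N_{B(W)}(q) = ∅, B ∩ V(W) = ∅, and every variable b ∈ B for which W contains a clause c with b ∈ lit(c) and a clause c' with ¬b ∈ lit(c') belongs to Z. Then there is a truth assignment τ ∈ 2^B such that inc(F[τ]) contains all vertices from the region R(q). -/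
/-!
Let `τ` make every literal over `B` occurring in the clauses of the region `R q` false: set `b`
to `false` if `b` occurs positively in such a clause and to `true` otherwise. This works unless
some `b ∈ B` occurs positively in a clause `c` and negatively in a clause `c'` of the region.
Such a `b` lies in `Z`, and `c`, `c'` are both adjacent to `b ∉ N q`, so condition (5) of the
template forces `c = c'`, which is impossible since no clause contains `b` and `¬b`.
-/

namespace CNF

variable {V : Type} (F : CNF V)

lemma mem_cls_of_inc_adj {c : F.ι} {u : V ⊕ F.ι} (h : F.inc.Adj (Sum.inr c) u) : c ∈ F.cls := by
  rcases u with _ | _ <;> simp_all [CNF.inc]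

lemma inc_adj_of_mem_lit {c : F.ι} {x : V} {s : Bool} (hc : c ∈ F.cls) (hx : (x, s) ∈ F.lit c) :
    F.inc.Adj (Sum.inl x) (Sum.inr c) := by
  cases s <;> simp_all [CNF.inc]

lemma exists_subset_surv (B : Finset V) (A : Set (V ⊕ F.ι))
    (hvar : ∀ x, Sum.inl x ∈ A → x ∉ B)
    (hcls : ∀ b ∈ B, ∀ c c' : F.ι, Sum.inr c ∈ A → Sum.inr c' ∈ A →
      (b, true) ∈ F.lit c → (b, false) ∈ F.lit c' → False) :
    ∃ τ : V → Bool, A ⊆ F.surv B τ := by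
  classical
  refine ⟨fun b => !decide (∃ c, Sum.inr c ∈ A ∧ (b, true) ∈ F.lit c), ?_⟩
  rintro (x | c) hA
  · exact hvar x hA
  · rintro ⟨b, (_ | _)⟩ hl hb
    · simpa using fun c' hc' hpos => hcls b hb c' c hc' hA hpos hl
    · simpa using ⟨c, hA, hl⟩

end CNF

namespace ValidOT

variable {α κ : Type} {G : SimpleGraph α} {W : G.Subgraph} {Z : Finset α} {t : ℕ} {Q : Finset κ}
  {N : κ → Finset α} {P : Set (Set α)} {R : κ → Set α}

lemma region_subset_verts (hOT : ValidOT G W Z t Q N P R) {q : κ} (hq : q ∈ Q) :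
    R q ⊆ W.verts :=
  (hOT.1 _ (hOT.2.2.2.1 q hq)).1

lemma exists_adj_of_mem_region (hOT : ValidOT G W Z t Q N P R) {q : κ} (hq : q ∈ Q)
    {v : α} (hv : v ∈ R q) : ∃ u, G.Adj v u := by
  by_cases hnt : (R q).Nontrivial
  · have : Nontrivial (W.induce (R q)).verts := hnt.coe_sort
    obtain ⟨u, hu⟩ := (hOT.1 _ (hOT.2.2.2.1 q hq)).2.preconnected.exists_adj_of_nontrivial ⟨v, hv⟩
    exact ⟨u, W.adj_sub hu.2.2⟩
  · -- `N q` is nonempty because `q` has a private neighbour.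
    obtain ⟨z, hz, -⟩ := hOT.2.2.2.2.2.2.1 q hq
    obtain ⟨-, w, hw, hzw⟩ := hOT.2.2.2.2.2.1 q hq z hz
    rw [Set.not_nontrivial_iff.mp hnt hv hw]
    exact ⟨z, hzw.symm⟩

lemma eq_of_adj_of_notMem (hOT : ValidOT G W Z t Q N P R) {q : κ} (hq : q ∈ Q)
    {v v' z : α} (hv : v ∈ R q) (hv' : v' ∈ R q) (hz : z ∈ Z) (hzN : z ∉ N q)
    (hvz : G.Adj v z) (hv'z : G.Adj v' z) : v = v' :=
  hOT.2.2.2.2.2.2.2.2.2 q hq v hv v' hv' ⟨z, hz, hvz, hzN⟩ ⟨z, hz, hv'z, hzN⟩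

end ValidOT

theorem stmt5_general {V : Type} (t : ℕ) (F : CNF V) (W : F.inc.Subgraph)
    (Z : Finset (V ⊕ F.ι))
    {κ : Type} (Q : Finset κ) (N : κ → Finset (V ⊕ F.ι))
    (P : Set (Set (V ⊕ F.ι))) (R : κ → Set (V ⊕ F.ι))
    (hOT : ValidOT F.inc W Z t Q N P R)
    (q : κ) (hq : q ∈ Q)
    (B : Finset V)
    (hBN : ∀ b ∈ B, Sum.inl b ∉ N q)
    (hBW : ∀ b ∈ B, Sum.inl b ∉ W.verts)
    (hBZ : ∀ b ∈ B,
      (∃ c c' : F.ι, Sum.inr c ∈ W.verts ∧ Sum.inr c' ∈ W.verts ∧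
        (b, true) ∈ F.lit c ∧ (b, false) ∈ F.lit c') → Sum.inl b ∈ Z) :
    ∃ τ : V → Bool, R q ⊆ F.surv B τ := by
  have hRW := hOT.region_subset_verts hq
  have hcls : ∀ c, Sum.inr c ∈ R q → c ∈ F.cls := fun c hc =>
    F.mem_cls_of_inc_adj (hOT.exists_adj_of_mem_region hq hc).choose_spec
  refine F.exists_subset_surv B (R q) (fun x hx hxB => hBW x hxB (hRW hx)) ?_
  intro b hb c c' hc hc' hpos hneg
  have hbZ := hBZ b hb ⟨c, c', hRW hc, hRW hc', hpos, hneg⟩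
  have hcc' : c = c' := Sum.inr_injective <| hOT.eq_of_adj_of_notMem hq hc hc' hbZ (hBN b hb)
    (F.inc_adj_of_mem_lit (hcls c hc) hpos).symm (F.inc_adj_of_mem_lit (hcls c' hc') hneg).symm
  subst hcc'
  exact F.ok c (hcls c hc) b ⟨hpos, hneg⟩

/-- Given a valid obstruction-template of a subgraph `W` of `inc(F)` w.r.t. `Z`,
a vertex `q` of its new-vertex side, and a set `B ⊆ var(F)` avoiding `N_{B(W)}(q)` and `V(W)`
whose members killing `W` externally all lie in `Z`, some assignment `τ ∈ 2^B` keeps all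
vertices of the region `R(q)` in `inc(F[τ])`. -/
theorem stmt5 {V : Type} [DecidableEq V] (t : ℕ) (F : CNF V) (W : F.inc.Subgraph)
    (hWconn : W.Connected)
    (Z : Finset (V ⊕ F.ι)) (hZvar : ∀ z ∈ Z, ∃ x : V, z = Sum.inl x ∧ x ∈ F.vars)
    (hZW : ∀ z ∈ Z, z ∉ W.verts)
    {κ : Type} (Q : Finset κ) (N : κ → Finset (V ⊕ F.ι))
    (P : Set (Set (V ⊕ F.ι))) (R : κ → Set (V ⊕ F.ι))
    (hOT : ValidOT F.inc W Z t Q N P R)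
    (q : κ) (hq : q ∈ Q)
    (B : Finset V) (hBvar : B ⊆ F.vars)
    (hBN : ∀ b ∈ B, Sum.inl b ∉ N q)
    (hBW : ∀ b ∈ B, Sum.inl b ∉ W.verts)
    (hBZ : ∀ b ∈ B,
      (∃ c c' : F.ι, Sum.inr c ∈ W.verts ∧ Sum.inr c' ∈ W.verts ∧
        (b, true) ∈ F.lit c ∧ (b, false) ∈ F.lit c') → Sum.inl b ∈ Z) :
    ∃ τ : V → Bool, R q ⊆ F.surv B τ :=
  stmt5_general t F W Z Q N P R hOT q hq B hBN hBW hBZ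
end

section
/- For every integer t ≥ 0, every graph that contains a subdivision of the (2t+2)-wall as a subgraph has treewidth at least t+1. -/
/-!
If `G` has a tree decomposition of width `t`, then some bag meets every member of any finite
bramble of `G` (a family of pairwise touching connected vertex sets): the nodes whose bags meet a
member form a subtree, these subtrees pairwise intersect, and finitely many pairwise intersecting
subtrees of a tree have a common node. So a finite bramble all of whose hitting sets have at least
`t + 2` vertices rules out width `t`. Brambles pull back along minors, and a graph containing a
subdivision of `H` has `H` as a minor.

In the `(2t+2)`-wall such a bramble consists of `A = {(i, j) : i ≥ 2t+1, j ≤ 2t+1}`,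
`B = {(i, j) : j = 2t+2}` and the crosses
`{(i, j) : i ∈ {2m+1, 2m+2}, j ≤ 2t+1} ∪ {(i, j₀) : i ≤ 2t}` for `m < t` and `1 ≤ j₀ ≤ 2t+1`.
A hitting set contains a vertex of `A` and one of `B`, which lie in no cross; the rest of it either
meets each of the `t` disjoint sets of the first kind or, missing one of them, meets each of the
`2t+1` disjoint sets of the second kind.
-/

open SimpleGraph

lemma Set.PairwiseDisjoint.encard_le_of_inter_nonempty {ι β : Type*} {I : Set ι} {R : ι → Set β}
    {S : Set β} (hR : I.PairwiseDisjoint R) (hS : ∀ i ∈ I, (R i ∩ S).Nonempty) :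
    I.encard ≤ S.encard := by
  let f : I → S := fun i => ⟨(hS i i.2).some, (hS i i.2).some_mem.2⟩
  refine ENat.card_le_card_of_injective (f := f) fun i i' h => Subtype.ext (by_contra fun hne => ?_)
  have h' : (hS i i.2).some = (hS i' i'.2).some := congrArg Subtype.val h
  exact Set.disjoint_left.mp (hR i.2 i'.2 hne) (hS i i.2).some_mem.1 (h' ▸ (hS i' i'.2).some_mem.1)

namespace SimpleGraph

variable {V α β ι : Type*}

lemma Walk.IsPath.mem_support_tail_iff {G : SimpleGraph V} {u v x : V} {p : G.Walk u v}
    (hp : p.IsPath) (hnil : ¬ p.Nil) : x ∈ p.tail.support ↔ x ∈ p.support ∧ x ≠ u := by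
  have hnd := hp.support_nodup
  rw [← p.cons_support_tail hnil, List.nodup_cons] at hnd
  rw [← p.cons_support_tail hnil, List.mem_cons]
  exact ⟨fun hx => ⟨Or.inr hx, fun h => hnd.1 (h ▸ hx)⟩, fun ⟨hx, hxu⟩ => hx.resolve_left hxu⟩

section PathConvex

variable {T : SimpleGraph V}

lemma IsAcyclic.eq_of_isPath (hT : T.IsAcyclic) {u v : V} {p q : T.Walk u v} (hp : p.IsPath)
    (hq : q.IsPath) : p = q :=
  congrArg Subtype.val ((hT.subsingleton_path u v).elim ⟨p, hp⟩ ⟨q, hq⟩)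

def IsPathConvex (T : SimpleGraph V) (U : Set V) : Prop :=
  ∀ ⦃u v : V⦄, u ∈ U → v ∈ U → ∀ p : T.Walk u v, p.IsPath → ∀ x ∈ p.support, x ∈ U

lemma IsPathConvex.inter {U U' : Set V} (hU : T.IsPathConvex U) (hU' : T.IsPathConvex U') :
    T.IsPathConvex (U ∩ U') :=
  fun _ _ hu hv p hp x hx => ⟨hU hu.1 hv.1 p hp x hx, hU' hu.2 hv.2 p hp x hx⟩

lemma IsAcyclic.isPathConvex_of_preconnected (hT : T.IsAcyclic) {U : Set V}
    (hU : (T.induce U).Preconnected) : T.IsPathConvex U := by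
  classical
  intro u v hu hv p hp x hx
  obtain ⟨w⟩ := hU ⟨u, hu⟩ ⟨v, hv⟩
  let w' := w.map (Embedding.induce U).toHom
  rw [hT.eq_of_isPath hp w'.bypass_isPath] at hx
  have hx' := w'.support_bypass_subset_support hx
  rw [Walk.support_map] at hx'
  obtain ⟨y, -, rfl⟩ := List.mem_map.mp hx'
  exact y.2

lemma Walk.exists_eq_append_last_mem {u v : V} (S : Set V) (p : T.Walk u v)
    (hS : ∃ y ∈ p.support, y ∈ S) :
    ∃ (m : V) (p₁ : T.Walk u m) (p₂ : T.Walk m v),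
      p = p₁.append p₂ ∧ m ∈ S ∧ ∀ x ∈ p₂.support, x ∈ S → x = m := by
  induction p with
  | @nil u =>
    obtain ⟨y, hy, hyS⟩ := hS
    rw [Walk.support_nil, List.mem_singleton] at hy
    subst hy
    exact ⟨y, .nil, .nil, rfl, hyS, fun x hx _ => by simpa using hx⟩
  | @cons u w v h q ih =>
    by_cases hq : ∃ y ∈ q.support, y ∈ S
    · obtain ⟨m, p₁, p₂, rfl, hm, hlast⟩ := ih hq
      exact ⟨m, .cons h p₁, p₂, rfl, hm, hlast⟩
    · push Not at hq
      obtain ⟨y, hy, hyS⟩ := hS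
      have hu : u ∈ S := by
        rcases List.mem_cons.mp hy with rfl | hy
        · exact hyS
        · exact absurd hyS (hq y hy)
      refine ⟨u, .nil, .cons h q, rfl, hu, fun x hx hxS => ?_⟩
      rcases List.mem_cons.mp hx with rfl | hx
      · rfl
      · exact absurd hxS (hq x hx)

lemma IsAcyclic.exists_mem_support_of_isPath (hT : T.IsAcyclic) {a b c : V}
    {p : T.Walk a b} {q : T.Walk a c} {r : T.Walk b c}
    (hp : p.IsPath) (hq : q.IsPath) (hr : r.IsPath) :
    ∃ m, m ∈ p.support ∧ m ∈ q.support ∧ m ∈ r.support := by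
  classical
  obtain ⟨m, p₁, p₂, rfl, hmq, hlast⟩ :=
    p.exists_eq_append_last_mem {x | x ∈ q.support} ⟨a, p.start_mem_support, q.start_mem_support⟩
  -- `p₂` meets `q` only at `m`, so going back along `p₂` and on along `q` is a path `b ⟶ c`
  have hp₂ : p₂.IsPath := hp.of_append_right
  have hq₂ : (q.dropUntil m hmq).IsPath := hq.dropUntil hmq
  have hs : (p₂.reverse.append (q.dropUntil m hmq)).IsPath := by
    rw [Walk.isPath_def, Walk.support_append, List.nodup_append]
    refine ⟨by simpa using hp₂.support_nodup, hq₂.support_nodup.sublist (List.tail_sublist _), ?_⟩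
    intro x hx y hy hxy
    subst hxy
    have hxm : x = m := hlast x (by simpa using hx)
      (q.support_dropUntil_subset_support hmq (List.mem_of_mem_tail hy))
    have hnd := hq₂.support_nodup
    rw [← Walk.cons_tail_support] at hnd
    exact (List.nodup_cons.mp hnd).1 (hxm ▸ hy)
  refine ⟨m, Walk.mem_support_append_iff _ _ |>.mpr (Or.inr p₂.start_mem_support), hmq, ?_⟩
  rw [hT.eq_of_isPath hr hs]
  exact Walk.mem_support_append_iff _ _ |>.mpr (Or.inl (by simp))

lemma IsTree.inter_inter_nonempty (hT : T.IsTree) {U₁ U₂ U₃ : Set V} (h₁ : T.IsPathConvex U₁)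
    (h₂ : T.IsPathConvex U₂) (h₃ : T.IsPathConvex U₃) (h₁₂ : (U₁ ∩ U₂).Nonempty)
    (h₁₃ : (U₁ ∩ U₃).Nonempty) (h₂₃ : (U₂ ∩ U₃).Nonempty) : (U₁ ∩ U₂ ∩ U₃).Nonempty := by
  obtain ⟨a, ha₁, ha₂⟩ := h₁₂
  obtain ⟨b, hb₁, hb₃⟩ := h₁₃
  obtain ⟨c, hc₂, hc₃⟩ := h₂₃
  obtain ⟨p, hp, -⟩ := hT.existsUnique_path a b
  obtain ⟨q, hq, -⟩ := hT.existsUnique_path a c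
  obtain ⟨r, hr, -⟩ := hT.existsUnique_path b c
  obtain ⟨m, hmp, hmq, hmr⟩ := hT.isAcyclic.exists_mem_support_of_isPath hp hq hr
  exact ⟨m, ⟨h₁ ha₁ hb₁ p hp m hmp, h₂ ha₂ hc₂ q hq m hmq⟩, h₃ hb₃ hc₃ r hr m hmr⟩

theorem IsTree.exists_forall_mem_of_finite (hT : T.IsTree) {𝓤 : Set (Set V)} (hfin : 𝓤.Finite)
    (hconv : ∀ U ∈ 𝓤, T.IsPathConvex U) (hne : ∀ U ∈ 𝓤, ∀ U' ∈ 𝓤, (U ∩ U').Nonempty) :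
    ∃ x, ∀ U ∈ 𝓤, x ∈ U := by
  suffices key : ∀ K : Set V, T.IsPathConvex K → K.Nonempty → (∀ U ∈ 𝓤, (K ∩ U).Nonempty) →
      ∃ x ∈ K, ∀ U ∈ 𝓤, x ∈ U by
    obtain ⟨x, -, hx⟩ := key Set.univ (fun _ _ _ _ _ _ _ _ => trivial)
      (have := hT.connected.nonempty; Set.univ_nonempty) fun U hU => by simpa using hne U hU U hU
    exact ⟨x, hx⟩
  -- adding `U` to the family shrinks `K` to `K ∩ U`, which by the three-set case still meets
  -- every other member
  induction 𝓤, hfin using Set.Finite.induction_on with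
  | empty => exact fun K _ ⟨x, hx⟩ _ => ⟨x, hx, by simp⟩
  | @insert U 𝓤 _ _ ih =>
    intro K hK _ hKU
    simp only [Set.mem_insert_iff, forall_eq_or_imp] at hconv hne hKU
    obtain ⟨x, ⟨hxK, hxU⟩, hx⟩ := ih hconv.2 (fun U' hU' U'' hU'' => hne.2 U' hU' |>.2 U'' hU'')
      (K ∩ U) (hK.inter hconv.1) hKU.1 (fun U' hU' => hT.inter_inter_nonempty hK hconv.1
        (hconv.2 U' hU') hKU.1 (hKU.2 U' hU') (hne.1.2 U' hU'))
    exact ⟨x, hxK, by simpa [hxU] using hx⟩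

end PathConvex

section Bramble

variable {G : SimpleGraph α}

def Touch (G : SimpleGraph α) (X Y : Set α) : Prop :=
  (X ∩ Y).Nonempty ∨ ∃ x ∈ X, ∃ y ∈ Y, G.Adj x y

structure IsBramble (G : SimpleGraph α) (𝓑 : Set (Set α)) : Prop where
  connected : ∀ X ∈ 𝓑, (G.induce X).Connected
  touch : 𝓑.Pairwise G.Touch

lemma Touch.symm {X Y : Set α} (h : G.Touch X Y) : G.Touch Y X :=
  h.imp (fun ⟨x, hxX, hxY⟩ => ⟨x, hxY, hxX⟩) fun ⟨x, hx, y, hy, hxy⟩ => ⟨y, hy, x, hx, hxy.symm⟩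

lemma IsBramble.touch_of_mem {𝓑 : Set (Set α)} (h𝓑 : G.IsBramble 𝓑) {X Y : Set α} (hX : X ∈ 𝓑)
    (hY : Y ∈ 𝓑) : G.Touch X Y := by
  obtain rfl | hXY := eq_or_ne X Y
  · obtain ⟨⟨x, hx⟩⟩ := (h𝓑.connected X hX).nonempty
    exact Or.inl ⟨x, hx, hx⟩
  · exact h𝓑.touch hX hY hXY

lemma preconnected_induce_biUnion {H : SimpleGraph β} {C : β → Set α}
    (hC : ∀ u, (G.induce (C u)).Preconnected) (hadj : ∀ u v, H.Adj u v → G.Touch (C u) (C v))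
    {X : Set β} (hX : (H.induce X).Preconnected) :
    (G.induce (⋃ u ∈ X, C u)).Preconnected := by
  have hsub : ∀ u ∈ X, C u ⊆ ⋃ u ∈ X, C u := fun u hu => Set.subset_biUnion_of_mem hu
  have hpiece : ∀ u (hu : u ∈ X) x (hx : x ∈ C u) y (hy : y ∈ C u),
      (G.induce (⋃ u ∈ X, C u)).Reachable ⟨x, hsub u hu hx⟩ ⟨y, hsub u hu hy⟩ :=
    fun u hu x hx y hy => (hC u ⟨x, hx⟩ ⟨y, hy⟩).map (induceHomOfLE G (hsub u hu)).toHom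
  have hwalk : ∀ (u v : X) (_ : (H.induce X).Walk u v) x (hx : x ∈ C u) y (hy : y ∈ C v),
      (G.induce (⋃ u ∈ X, C u)).Reachable ⟨x, hsub u u.2 hx⟩ ⟨y, hsub v v.2 hy⟩ := by
    intro u v w
    induction w with
    | @nil u => exact fun x hx y hy => hpiece _ u.2 x hx y hy
    | @cons u v w huv _ ih =>
      intro x hx y hy
      rcases hadj u v huv with ⟨z, hzu, hzv⟩ | ⟨a, ha, c, hc, hac⟩
      · exact (hpiece _ u.2 x hx z hzu).trans (ih z hzv y hy)
      · have hac' : (G.induce (⋃ u ∈ X, C u)).Adj ⟨a, hsub u u.2 ha⟩ ⟨c, hsub v v.2 hc⟩ := hac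
        exact ((hpiece _ u.2 x hx a ha).trans hac'.reachable).trans (ih c hc y hy)
  rintro ⟨x, hx⟩ ⟨y, hy⟩
  obtain ⟨u, hu, hxu⟩ := Set.mem_iUnion₂.mp hx
  obtain ⟨v, hv, hyv⟩ := Set.mem_iUnion₂.mp hy
  exact hwalk ⟨u, hu⟩ ⟨v, hv⟩ (hX _ _).some x hxu y hyv

end Bramble

structure IsTreeDecomposition (G : SimpleGraph α) (T : SimpleGraph ι) (bag : ι → Set α) :
    Prop where
  isTree : T.IsTree
  exists_mem_bag_of_adj : ∀ u v, G.Adj u v → ∃ i, u ∈ bag i ∧ v ∈ bag i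
  connected_bags : ∀ v, (T.induce {i | v ∈ bag i}).Connected

namespace IsTreeDecomposition

variable {G : SimpleGraph α} {T : SimpleGraph ι} {bag : ι → Set α}

lemma inter_nonempty_of_touch (hD : G.IsTreeDecomposition T bag) {X Y : Set α}
    (hXY : G.Touch X Y) : ((⋃ v ∈ X, {i | v ∈ bag i}) ∩ ⋃ v ∈ Y, {i | v ∈ bag i}).Nonempty := by
  rcases hXY with ⟨v, hvX, hvY⟩ | ⟨x, hx, y, hy, hxy⟩
  · obtain ⟨⟨i, hi⟩⟩ := (hD.connected_bags v).nonempty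
    exact ⟨i, Set.mem_biUnion hvX hi, Set.mem_biUnion hvY hi⟩
  · obtain ⟨i, hxi, hyi⟩ := hD.exists_mem_bag_of_adj x y hxy
    exact ⟨i, Set.mem_biUnion hx hxi, Set.mem_biUnion hy hyi⟩

lemma isPathConvex_biUnion (hD : G.IsTreeDecomposition T bag) {X : Set α}
    (hX : (G.induce X).Preconnected) : T.IsPathConvex (⋃ v ∈ X, {i | v ∈ bag i}) :=
  hD.isTree.isAcyclic.isPathConvex_of_preconnected <|
    preconnected_induce_biUnion (fun v => (hD.connected_bags v).preconnected)
      (fun u v huv => Or.inl (hD.exists_mem_bag_of_adj u v huv)) hX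

theorem exists_forall_inter_bag_nonempty (hD : G.IsTreeDecomposition T bag)
    {𝓑 : Set (Set α)} (h𝓑 : G.IsBramble 𝓑) (hfin : 𝓑.Finite) :
    ∃ i, ∀ X ∈ 𝓑, (X ∩ bag i).Nonempty := by
  obtain ⟨i, hi⟩ := hD.isTree.exists_forall_mem_of_finite
    (hfin.image fun X => ⋃ v ∈ X, {i | v ∈ bag i})
    (by rintro _ ⟨X, hX, rfl⟩; exact hD.isPathConvex_biUnion (h𝓑.connected X hX).preconnected)
    (by
      rintro _ ⟨X, hX, rfl⟩ _ ⟨Y, hY, rfl⟩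
      exact hD.inter_nonempty_of_touch (h𝓑.touch_of_mem hX hY))
  refine ⟨i, fun X hX => ?_⟩
  obtain ⟨v, hv, hvi⟩ := Set.mem_iUnion₂.mp (hi _ ⟨X, hX, rfl⟩)
  exact ⟨v, hv, hvi⟩

end IsTreeDecomposition

theorem IsBramble.not_twLE {α : Type} {G : SimpleGraph α} {𝓑 : Set (Set α)}
    (h𝓑 : G.IsBramble 𝓑) (hfin : 𝓑.Finite) {t : ℕ}
    (hord : ∀ S : Set α, (∀ X ∈ 𝓑, (X ∩ S).Nonempty) → t + 2 ≤ S.encard) : ¬ twLE G t := by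
  rintro ⟨ι, T, bag, hT, hadj, hconn, hcard⟩
  obtain ⟨i, hi⟩ := (⟨hT, hadj, hconn⟩ : G.IsTreeDecomposition T fun i => ↑(bag i))
    |>.exists_forall_inter_bag_nonempty h𝓑 hfin
  have hi := hord _ hi
  rw [Set.encard_coe_eq_coe_finsetCard] at hi
  have := hcard i
  norm_cast at hi
  omega

end SimpleGraph

theorem HasMinor.not_twLE_of_isBramble {α β : Type} {G : SimpleGraph α} {H : SimpleGraph β}
    (hGH : HasMinor G H) {𝓑 : Set (Set β)} (h𝓑 : H.IsBramble 𝓑) (hfin : 𝓑.Finite) {t : ℕ}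
    (hord : ∀ S : Set β, (∀ X ∈ 𝓑, (X ∩ S).Nonempty) → t + 2 ≤ S.encard) : ¬ twLE G t := by
  classical
  obtain ⟨C, hne, hconn, hdisj, hadj⟩ := hGH
  refine IsBramble.not_twLE (𝓑 := (fun X => ⋃ u ∈ X, C u) '' 𝓑) ⟨?_, ?_⟩ (hfin.image _) ?_
  · rintro _ ⟨X, hX, rfl⟩
    obtain ⟨⟨u, hu⟩⟩ := (h𝓑.connected X hX).nonempty
    obtain ⟨a, ha⟩ := hne u
    have : Nonempty (⋃ u ∈ X, C u) := ⟨⟨a, Set.mem_biUnion hu ha⟩⟩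
    exact ⟨preconnected_induce_biUnion (fun u => (hconn u).preconnected)
      (fun u v huv => Or.inr (hadj u v huv)) (h𝓑.connected X hX).preconnected⟩
  · rintro _ ⟨X, hX, rfl⟩ _ ⟨Y, hY, rfl⟩ hXY
    rcases h𝓑.touch hX hY (fun h => hXY (h ▸ rfl)) with ⟨u, huX, huY⟩ | ⟨u, hu, v, hv, huv⟩
    · obtain ⟨a, ha⟩ := hne u
      exact Or.inl ⟨a, Set.mem_biUnion huX ha, Set.mem_biUnion huY ha⟩
    · obtain ⟨a, ha, c, hc, hac⟩ := hadj u v huv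
      exact Or.inr ⟨a, Set.mem_biUnion hu ha, c, Set.mem_biUnion hv hc, hac⟩
  · intro S hS
    let pick u : α := if h : (C u ∩ S).Nonempty then h.some else (hne u).some
    have hpick : ∀ u, (C u ∩ S).Nonempty → pick u ∈ C u ∩ S := fun u h => by
      simp only [pick, dif_pos h]
      exact h.some_mem
    calc (t + 2 : ℕ∞) ≤ {u | (C u ∩ S).Nonempty}.encard := hord _ fun X hX => by
          obtain ⟨a, haX, haS⟩ := hS _ ⟨X, hX, rfl⟩
          obtain ⟨u, hu, hau⟩ := Set.mem_iUnion₂.mp haX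
          exact ⟨u, hu, a, hau, haS⟩
      _ ≤ S.encard := Set.encard_le_encard_of_injOn (fun u hu => (hpick u hu).2)
          fun u hu v hv huv => by_contra fun h => Set.disjoint_left.mp (hdisj u v h)
            (hpick u hu).1 (huv ▸ (hpick v hv).1)

namespace IsSubdivisionOf

variable {γ β : Type} {K : SimpleGraph γ} {H : SimpleGraph β}

section BranchSet

variable [LinearOrder β] {b : β → γ} {p : ∀ u v : β, H.Adj u v → K.Walk (b u) (b v)}

variable (b p) in
/-- Each subdivided edge `uv`, `u < v`, goes to the branch set of `u`: its path minus `b v`, written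
as the tail of the reverse path `p v u`. -/
def branchSet (u : β) : Set γ :=
  insert (b u) (⋃ (v) (h : H.Adj u v) (_ : u < v), {x | x ∈ (p v u h.symm).tail.support})

lemma connected_induce_branchSet (u : β) : (K.induce (branchSet b p u)).Connected := by
  refine K.induce_connected_of_patches (b u) (Set.mem_insert _ _) fun {x} hx => ?_
  rcases hx with rfl | hx
  · exact ⟨{b u}, by simp [branchSet], rfl, rfl, .refl _⟩
  · obtain ⟨v, h, huv, hx⟩ : ∃ v, ∃ h : H.Adj u v, u < v ∧ x ∈ (p v u h.symm).tail.support := by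
      simpa using hx
    refine ⟨_, fun y hy => Or.inr (Set.mem_iUnion₂.mpr ⟨v, h, Set.mem_iUnion.mpr ⟨huv, hy⟩⟩),
      (p v u h.symm).tail.end_mem_support, hx, (p v u h.symm).tail.connected_induce_support _ _⟩

variable (hinj : Function.Injective b)
include hinj

lemma exists_adj_branchSet {u v : β} (h : H.Adj u v) :
    ∃ x ∈ branchSet b p u, ∃ y ∈ branchSet b p v, K.Adj x y := by
  have hsnd {u v : β} (h : H.Adj u v) (huv : u < v) :
      (p v u h.symm).snd ∈ branchSet b p u ∧ K.Adj (b v) (p v u h.symm).snd := by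
    have hnil := Walk.not_nil_of_ne (p := p v u h.symm) (hinj.ne h.ne')
    exact ⟨Or.inr (Set.mem_iUnion₂.mpr ⟨v, h, Set.mem_iUnion.mpr ⟨huv,
      (p v u h.symm).tail.start_mem_support⟩⟩), (p v u h.symm).adj_snd hnil⟩
  rcases lt_or_gt_of_ne h.ne with huv | hvu
  · exact ⟨_, (hsnd h huv).1, b v, Set.mem_insert _ _, (hsnd h huv).2.symm⟩
  · exact ⟨b u, Set.mem_insert _ _, _, (hsnd h.symm hvu).1, (hsnd h.symm hvu).2⟩

variable (hpath : ∀ u v (h : H.Adj u v), (p u v h).IsPath)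
  (hsymm : ∀ u v (h : H.Adj u v), p v u h.symm = (p u v h).reverse)
include hpath hsymm

lemma eq_or_mem_support_of_mem_branchSet {u : β} {x : γ} (hx : x ∈ branchSet b p u) :
    x = b u ∨ ∃ v, ∃ h : H.Adj u v, u < v ∧ x ∈ (p u v h).support ∧ x ≠ b v := by
  refine hx.imp_right fun hx => ?_
  obtain ⟨v, h, huv, hx⟩ : ∃ v, ∃ h : H.Adj u v, u < v ∧ x ∈ (p v u h.symm).tail.support := by
    simpa using hx
  rw [(hpath v u h.symm).mem_support_tail_iff (Walk.not_nil_of_ne (hinj.ne h.ne')), hsymm u v h,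
    Walk.support_reverse, List.mem_reverse] at hx
  exact ⟨v, h, huv, hx⟩

variable (hbranch : ∀ u v (h : H.Adj u v) w, b w ∈ (p u v h).support → w = u ∨ w = v)
include hbranch

lemma eq_of_apply_mem_branchSet {u w : β} (hw : b w ∈ branchSet b p u) : w = u := by
  rcases eq_or_mem_support_of_mem_branchSet hinj hpath hsymm hw with h | ⟨v, h, -, hwv, hne⟩
  · exact hinj h
  · exact (hbranch u v h w hwv).resolve_right (fun hv => hne (hv ▸ rfl))

lemma disjoint_branchSet
    (hdisj : ∀ u v (h : H.Adj u v) u' v' (h' : H.Adj u' v'), s(u, v) ≠ s(u', v') →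
      ∀ x, x ∈ (p u v h).support → x ∈ (p u' v' h').support → x = b u ∨ x = b v)
    {u u' : β} (huu' : u ≠ u') : Disjoint (branchSet b p u) (branchSet b p u') := by
  refine Set.disjoint_left.mpr fun x hx hx' => ?_
  rcases eq_or_mem_support_of_mem_branchSet hinj hpath hsymm hx with rfl | ⟨v, h, huv, hxv, hxne⟩
  · exact huu' (eq_of_apply_mem_branchSet hinj hpath hsymm hbranch hx')
  rcases eq_or_mem_support_of_mem_branchSet hinj hpath hsymm hx' with
    rfl | ⟨v', h', huv', hxv', hxne'⟩
  · exact huu' (eq_of_apply_mem_branchSet hinj hpath hsymm hbranch hx).symm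
  by_cases he : s(u, v) = s(u', v')
  · rcases Sym2.eq_iff.mp he with ⟨rfl, -⟩ | ⟨rfl, rfl⟩
    · exact huu' rfl
    · exact lt_asymm huv huv'
  · rcases hdisj u v h u' v' h' he x hxv hxv' with rfl | rfl
    · exact huu' (eq_of_apply_mem_branchSet hinj hpath hsymm hbranch hx')
    · exact hxne rfl

end BranchSet

theorem hasMinor (hKH : IsSubdivisionOf K H) : HasMinor K H := by
  let : LinearOrder β := IsWellOrder.linearOrder WellOrderingRel
  obtain ⟨b, p, hinj, hpath, hsymm, hbranch, hdisj, -, -⟩ := hKH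
  exact ⟨branchSet b p, fun u => ⟨b u, Set.mem_insert _ _⟩, connected_induce_branchSet,
    fun _ _ => disjoint_branchSet hinj hpath hsymm hbranch hdisj,
    fun _ _ => exists_adj_branchSet hinj⟩

end IsSubdivisionOf

theorem HasMinor.of_subgraph {α β : Type} {G : SimpleGraph α} {H : SimpleGraph β} {W : G.Subgraph}
    (hWH : HasMinor W.coe H) : HasMinor G H := by
  obtain ⟨C, hne, hconn, hdisj, hadj⟩ := hWH
  refine ⟨fun u => Subtype.val '' C u, fun u => (hne u).image _, fun u => ?_,
    fun u v huv => (Set.disjoint_image_iff Subtype.val_injective).mpr (hdisj u v huv),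
    fun u v huv => ?_⟩
  · let f : W.coe.induce (C u) →g G.induce (Subtype.val '' C u) :=
      ⟨fun x => ⟨x.1.1, Set.mem_image_of_mem _ x.2⟩, fun h => h.adj_sub⟩
    refine (hconn u).map f ?_
    rintro ⟨_, x, hx, rfl⟩
    exact ⟨⟨x, hx⟩, rfl⟩
  · obtain ⟨a, ha, c, hc, hac⟩ := hadj u v huv
    exact ⟨a, Set.mem_image_of_mem _ ha, c, Set.mem_image_of_mem _ hc, hac.adj_sub⟩

theorem containsSubdivision.hasMinor {α β : Type} {G : SimpleGraph α} {H : SimpleGraph β}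
    (h : containsSubdivision G H) : HasMinor G H :=
  let ⟨_, hW⟩ := h
  hW.hasMinor.of_subgraph

lemma wall_adj_succ_fst {r i j : ℕ} (hi : 1 ≤ i) (hi' : i + 1 ≤ r) (hj : 1 ≤ j) (hj' : j ≤ r) :
    (Wall r).Adj ⟨(i, j), hi, by omega, hj, hj'⟩ ⟨(i + 1, j), by omega, hi', hj, hj'⟩ := by
  simp [Wall, wallGraph, wallRel]
  omega

lemma wall_adj_succ_snd {r i j : ℕ} (hi : 1 ≤ i) (hi' : i ≤ r) (hj : 1 ≤ j) (hj' : j + 1 ≤ r)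
    (he : Even (i + j)) :
    (Wall r).Adj ⟨(i, j), hi, hi', hj, by omega⟩ ⟨(i, j + 1), hi, hi', by omega, hj'⟩ := by
  simp [Wall, wallGraph, wallRel, he]
  omega

def wallBox (r i₁ i₂ j₁ j₂ : ℕ) : Set (wallVerts r) :=
  {v | i₁ ≤ v.1.1 ∧ v.1.1 ≤ i₂ ∧ j₁ ≤ v.1.2 ∧ v.1.2 ≤ j₂}

lemma mem_wallBox {r i₁ i₂ j₁ j₂ : ℕ} {v : wallVerts r} :
    v ∈ wallBox r i₁ i₂ j₁ j₂ ↔ i₁ ≤ v.1.1 ∧ v.1.1 ≤ i₂ ∧ j₁ ≤ v.1.2 ∧ v.1.2 ≤ j₂ :=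
  Iff.rfl

lemma connected_induce_wallBox_column {r i₁ i₂ j : ℕ} (h₁ : 1 ≤ i₁) (h₁₂ : i₁ < i₂)
    (h₂ : i₂ ≤ r) (hj : 1 ≤ j) (hj' : j ≤ r) :
    ((Wall r).induce (wallBox r i₁ i₂ j j)).Connected := by
  induction i₂, h₁₂ using Nat.le_induction with
  | base =>
    have hbox : wallBox r i₁ (i₁ + 1) j j =
        {⟨(i₁, j), h₁, by omega, hj, hj'⟩, ⟨(i₁ + 1, j), by omega, h₂, hj, hj'⟩} := by
      ext ⟨⟨a, c⟩, hv⟩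
      simp only [mem_wallBox, Set.mem_insert_iff, Set.mem_singleton_iff, Subtype.ext_iff,
        Prod.mk.injEq]
      omega
    rw [hbox]
    exact induce_pair_connected_of_adj (wall_adj_succ_fst h₁ h₂ hj hj')
  | succ i hi ih =>
    have hbox : wallBox r i₁ (i + 1) j j = wallBox r i₁ i j j ∪
        {⟨(i, j), by omega, by omega, hj, hj'⟩, ⟨(i + 1, j), by omega, h₂, hj, hj'⟩} := by
      ext ⟨⟨a, c⟩, hv⟩
      simp only [mem_wallBox, Set.mem_union, Set.mem_insert_iff, Set.mem_singleton_iff,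
        Subtype.ext_iff, Prod.mk.injEq]
      omega
    rw [hbox]
    exact induce_union_connected (ih (by omega)).preconnected
      (induce_pair_connected_of_adj (wall_adj_succ_fst (by omega) h₂ hj hj')).preconnected
      ⟨_, ⟨(by omega : i₁ ≤ i), le_rfl, le_rfl, le_rfl⟩, Set.mem_insert _ _⟩

lemma connected_induce_wallBox {r i₁ i₂ j₁ j₂ : ℕ} (h₁ : 1 ≤ i₁) (h₁₂ : i₁ < i₂) (h₂ : i₂ ≤ r)
    (h₁' : 1 ≤ j₁) (h₁₂' : j₁ ≤ j₂) (h₂' : j₂ ≤ r) :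
    ((Wall r).induce (wallBox r i₁ i₂ j₁ j₂)).Connected := by
  induction j₂, h₁₂' using Nat.le_induction with
  | base => exact connected_induce_wallBox_column h₁ h₁₂ h₂ h₁' h₂'
  | succ j hj ih =>
    have hbox : wallBox r i₁ i₂ j₁ (j + 1) =
        wallBox r i₁ i₂ j₁ j ∪ wallBox r i₁ i₂ (j + 1) (j + 1) := by
      ext v
      simp only [mem_wallBox, Set.mem_union]
      omega
    obtain ⟨i, hi, hi', he⟩ : ∃ i, i₁ ≤ i ∧ i ≤ i₁ + 1 ∧ Even (i + j) := by
      rcases Nat.even_or_odd (i₁ + j) with he | ho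
      · exact ⟨i₁, le_rfl, by omega, he⟩
      · exact ⟨i₁ + 1, by omega, le_rfl, by rw [add_right_comm]; exact ho.add_one⟩
    rw [hbox]
    refine connected_induce_union (ih (by omega)).preconnected
      (connected_induce_wallBox_column h₁ h₁₂ h₂ (by omega) h₂').preconnected ?_ ?_
      (wall_adj_succ_snd (by omega) (by omega) (by omega) h₂' he) <;>
    simp only [mem_wallBox] <;> omega

def wallCross (t m j : ℕ) : Set (wallVerts (2 * t + 2)) :=
  wallBox _ (2 * m + 1) (2 * m + 2) 1 (2 * t + 1) ∪ wallBox _ 1 (2 * t) j j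

def wallBramble (t : ℕ) : Set (Set (wallVerts (2 * t + 2))) :=
  {wallBox _ (2 * t + 1) (2 * t + 2) 1 (2 * t + 1),
    wallBox _ 1 (2 * t + 2) (2 * t + 2) (2 * t + 2)} ∪
    Set.image2 (wallCross t) (Set.Iio t) (Set.Icc 1 (2 * t + 1))

lemma connected_induce_of_mem_wallBramble {t : ℕ} {X : Set (wallVerts (2 * t + 2))}
    (hX : X ∈ wallBramble t) : ((Wall (2 * t + 2)).induce X).Connected := by
  rcases hX with (rfl | rfl) | ⟨m, hm, j, ⟨hj, hj'⟩, rfl⟩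
  · exact connected_induce_wallBox (by omega) (by omega) le_rfl le_rfl (by omega) (by omega)
  · exact connected_induce_wallBox le_rfl (by omega) le_rfl (by omega) le_rfl le_rfl
  · have hm : m < t := hm
    refine induce_union_connected (connected_induce_wallBox (by omega) (by omega) (by omega) le_rfl
        (by omega) (by omega)).preconnected
      (connected_induce_wallBox le_rfl (by omega) (by omega) hj le_rfl (by omega)).preconnected
      ⟨⟨(2 * m + 1, j), by omega, by omega, by omega, by omega⟩, ?_, ?_⟩ <;>
    simp only [mem_wallBox] <;> omega

lemma pairwise_touch_wallBramble (t : ℕ) : (wallBramble t).Pairwise (Wall (2 * t + 2)).Touch := by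
  have hAB : (Wall (2 * t + 2)).Touch (wallBox _ (2 * t + 1) (2 * t + 2) 1 (2 * t + 1))
      (wallBox _ 1 (2 * t + 2) (2 * t + 2) (2 * t + 2)) := by
    refine .inr ⟨_, ?_, _, ?_, wall_adj_succ_snd (i := 2 * t + 1) (j := 2 * t + 1)
      (by omega) (by omega) (by omega) le_rfl (Nat.even_iff.mpr (by omega))⟩ <;>
    simp only [mem_wallBox] <;> omega
  have hAX : ∀ m < t, ∀ j ∈ Set.Icc 1 (2 * t + 1), (Wall (2 * t + 2)).Touch
      (wallBox _ (2 * t + 1) (2 * t + 2) 1 (2 * t + 1)) (wallCross t m j) := by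
    rintro m hm j ⟨hj, hj'⟩
    refine .inr ⟨_, ?_, _, ?_, (wall_adj_succ_fst (i := 2 * t) (j := j)
      (by omega) (by omega) hj (by omega)).symm⟩ <;>
    simp only [wallCross, Set.mem_union, mem_wallBox] <;> omega
  have hBX : ∀ m < t, ∀ j ∈ Set.Icc 1 (2 * t + 1), (Wall (2 * t + 2)).Touch
      (wallBox _ 1 (2 * t + 2) (2 * t + 2) (2 * t + 2)) (wallCross t m j) := by
    rintro m hm j -
    refine .inr ⟨_, ?_, _, ?_, (wall_adj_succ_snd (i := 2 * m + 1) (j := 2 * t + 1)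
      (by omega) (by omega) (by omega) le_rfl (Nat.even_iff.mpr (by omega))).symm⟩ <;>
    simp only [wallCross, Set.mem_union, mem_wallBox] <;> omega
  have hXX : ∀ m < t, ∀ j ∈ Set.Icc 1 (2 * t + 1), ∀ m' < t, ∀ j',
      (Wall (2 * t + 2)).Touch (wallCross t m j) (wallCross t m' j') := by
    rintro m hm j ⟨hj, hj'⟩ m' hm' j'
    refine .inl ⟨⟨(2 * m' + 1, j), by omega, by omega, by omega, by omega⟩, ?_, ?_⟩ <;>
    simp only [wallCross, Set.mem_union, mem_wallBox] <;> omega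
  rintro X ((rfl | rfl) | ⟨m, hm, j, hj, rfl⟩) Y ((rfl | rfl) | ⟨m', hm', j', hj', rfl⟩) hne
  · exact absurd rfl hne
  · exact hAB
  · exact hAX m' hm' j' hj'
  · exact hAB.symm
  · exact absurd rfl hne
  · exact hBX m' hm' j' hj'
  · exact (hAX m hm j hj).symm
  · exact (hBX m hm j hj).symm
  · exact hXX m hm j hj m' hm' j'

lemma isBramble_wallBramble (t : ℕ) : (Wall (2 * t + 2)).IsBramble (wallBramble t) :=
  ⟨fun _ => connected_induce_of_mem_wallBramble, pairwise_touch_wallBramble t⟩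

theorem le_encard_of_forall_wallBramble_inter_nonempty {t : ℕ} {S : Set (wallVerts (2 * t + 2))}
    (hS : ∀ X ∈ wallBramble t, (X ∩ S).Nonempty) : t + 2 ≤ S.encard := by
  obtain ⟨a, haA, haS⟩ := hS _ (.inl (.inl rfl))
  obtain ⟨b, hbB, hbS⟩ := hS _ (.inl (.inr rfl))
  have hab : a ≠ b := by
    rintro rfl
    simp only [mem_wallBox] at haA hbB
    omega
  -- `a ∈ A` and `b ∈ B` lie in no cross
  have hcross : ∀ m < t, ∀ j ∈ Set.Icc 1 (2 * t + 1),
      (wallCross t m j ∩ (S \ {a, b})).Nonempty := by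
    intro m hm j hj
    obtain ⟨x, hx, hxS⟩ := hS _ (.inr ⟨m, hm, j, hj, rfl⟩)
    obtain ⟨-, hj⟩ := hj
    refine ⟨x, hx, hxS, ?_⟩
    rintro (rfl | rfl) <;>
    simp only [wallCross, Set.mem_union, mem_wallBox] at hx haA hbB <;> omega
  have hsplit : (S \ {a, b}).encard + 2 = S.encard := by
    rw [← Set.encard_pair hab]
    exact Set.encard_sdiff_add_encard_of_subset
      (Set.insert_subset haS (Set.singleton_subset_iff.mpr hbS))
  rw [← hsplit]
  gcongr
  by_cases hrows : ∀ m ∈ (Finset.range t : Set ℕ),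
      (wallBox (2 * t + 2) (2 * m + 1) (2 * m + 2) 1 (2 * t + 1) ∩ (S \ {a, b})).Nonempty
  · have := Set.PairwiseDisjoint.encard_le_of_inter_nonempty (fun m _ m' _ hne =>
      Set.disjoint_left.mpr fun x hx hx' => by simp only [mem_wallBox] at hx hx'; omega) hrows
    simpa only [Set.encard_coe_eq_coe_finsetCard, Finset.card_range] using this
  push Not at hrows
  obtain ⟨m, hm, hmS⟩ := hrows
  have hcols : ∀ j ∈ (Finset.Icc 1 (2 * t + 1) : Set ℕ),
      (wallBox (2 * t + 2) 1 (2 * t) j j ∩ (S \ {a, b})).Nonempty := by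
    intro j hj
    obtain ⟨x, hx | hx, hxS⟩ := hcross m (by simpa using hm) j (by simpa using hj)
    · exact absurd ⟨x, hx, hxS⟩ (Set.not_nonempty_iff_eq_empty.mpr hmS)
    · exact ⟨x, hx, hxS⟩
  have := Set.PairwiseDisjoint.encard_le_of_inter_nonempty (fun j _ j' _ hne =>
    Set.disjoint_left.mpr fun x hx hx' => by simp only [mem_wallBox] at hx hx'; omega) hcols
  rw [Set.encard_coe_eq_coe_finsetCard, Nat.card_Icc] at this
  exact le_trans (by norm_cast; omega) this

lemma finite_wallBramble (t : ℕ) : (wallBramble t).Finite :=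
  ((Set.finite_singleton _).insert _).union ((Set.finite_Iio t).image2 _ (Set.finite_Icc _ _))

/-- Every graph containing a subdivision of the `(2t+2)`-wall as a subgraph has
treewidth at least `t+1`. -/
theorem stmt16 (t : ℕ) {α : Type} (G : SimpleGraph α)
    (h : containsSubdivision G (Wall (2 * t + 2))) :
    ¬ twLE G t :=
  h.hasMinor.not_twLE_of_isBramble (isBramble_wallBramble t) (finite_wallBramble t)
    fun _ => le_encard_of_forall_wallBramble_inter_nonempty
end
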